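/- arXiv:1409.2135 — 6 statements merged into one kernel-verified Lean document; each statement's English description precedes it below -/
import Mathlib

section
/- Let 1 ≤ q ≤ s ≤ n-2 and let α_1,…,α_{s-q},a_{s-q+1},…,a_s and β_1,…,β_{s-q},b_{s-q+1},…,b_s be two sequences of indices in {1,…,n}, each consisting of pairwise distinct entries, such that: (i) x_{α_ℓ β_ℓ} ∈ U for 1 ≤ ℓ ≤ s-q; (ii) α_i < b_j and x_{α_i b_j} ∉ D ∪ U for all 1 ≤ i ≤ s-q and s-q+1 ≤ j ≤ s; (iii) x_{α_i β_j} ∉ D ∪ U for all 1 ≤ i < j ≤ s-q; (iv) the leading monomial in_≺([a_{s-q+1},…,a_s | b_{s-q+1},…,b_s]) is a product of variables from U. Then in_≺([α_1,…,α_{s-q},a_{s-q+1},…,a_s | β_1,…,β_{s-q},b_{s-q+1},…,b_s]) = x_{α_1 β_1} ⋯ x_{α_{s-q} β_{s-q}} · in_≺([a_{s-q+1},…,a_s | b_{s-q+1},…,b_s]). -/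
open MvPolynomial

/-- The set `D` of diagonal variables `x_{ii}` (0-indexed). -/
def Dset (n : ℕ) : Set (Sym2 (Fin n)) := {v | ∃ i : Fin n, v = s(i, i)}

/-- The set `U` of variables `x_{13}, x_{24}, …, x_{n-2,n}, x_{12}, x_{n-1,n}` (0-indexed). -/
def Uset (n : ℕ) : Set (Sym2 (Fin n)) :=
  {v | ∃ i j : Fin n, v = s(i, j) ∧
    ((j : ℕ) = (i : ℕ) + 2 ∨ ((i : ℕ) = 0 ∧ (j : ℕ) = 1) ∨
      ((i : ℕ) = n - 2 ∧ (j : ℕ) = n - 1))}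

/-- `rank` encodes the linear order on the variables described in the paper:
`x_{11} ≻ … ≻ x_{nn} ≻ x_{13} ≻ … ≻ x_{n-2,n} ≻ x_{12} ≻ x_{n-1,n} ≻ (rest)`,
where a smaller rank means a larger variable. -/
def IsGoodRank (n : ℕ) (rank : Sym2 (Fin n) → ℕ) : Prop :=
  Function.Injective rank ∧
  (∀ i : Fin n, rank s(i, i) = (i : ℕ)) ∧
  (∀ i j : Fin n, (j : ℕ) = (i : ℕ) + 2 → rank s(i, j) = n + (i : ℕ)) ∧
  (∀ i j : Fin n, (i : ℕ) = 0 → (j : ℕ) = 1 → rank s(i, j) = 2 * n - 2) ∧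
  (∀ i j : Fin n, (i : ℕ) = n - 2 → (j : ℕ) = n - 1 → rank s(i, j) = 2 * n - 1) ∧
  (∀ v : Sym2 (Fin n), v ∉ Dset n ∪ Uset n → 2 * n ≤ rank v)

/-- The degree reverse lexicographic order on exponent vectors induced by `rank`:
`a ≺ b` iff `deg a < deg b`, or the degrees agree and at the `rank`-largest (i.e. smallest)
variable where `a` and `b` differ, `a` has the larger exponent. -/
def DegRevLexLT {n : ℕ} (rank : Sym2 (Fin n) → ℕ) (a b : Sym2 (Fin n) →₀ ℕ) : Prop :=
  (a.sum fun _ e => e) < (b.sum fun _ e => e) ∨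
    ((a.sum fun _ e => e) = (b.sum fun _ e => e) ∧
      ∃ v : Sym2 (Fin n), b v < a v ∧ ∀ w : Sym2 (Fin n), rank v < rank w → a w = b w)

/-- `μ` is the leading monomial (exponent vector) of `f` w.r.t. the degrevlex order `≺`. -/
def IsLeadingMonomial {K : Type*} [Field K] {n : ℕ} (rank : Sym2 (Fin n) → ℕ)
    (f : MvPolynomial (Sym2 (Fin n)) K) (μ : Sym2 (Fin n) →₀ ℕ) : Prop :=
  μ ∈ f.support ∧ ∀ ν ∈ f.support, ν ≠ μ → DegRevLexLT rank ν μ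

/-- The minor `[a_1,…,a_s | b_1,…,b_s]` of the generic symmetric matrix `X = (x_{ij})`. -/
noncomputable def symMinor (K : Type*) [Field K] {n s : ℕ} (a b : Fin s → Fin n) :
    MvPolynomial (Sym2 (Fin n)) K :=
  Matrix.det (Matrix.of fun k l => (MvPolynomial.X s(a k, b l) : MvPolynomial (Sym2 (Fin n)) K))

/-!
In the permutation expansion of the minor, a permutation whose monomial involves only variables
from `D ∪ U` must fix the first `s-q` positions: by (ii) and (iii) the positions allowed for such
a permutation form a block triangular pattern whose first block is triangular. Hence the monomials
over `D ∪ U` of the big minor are exactly `x_{α_1 β_1} ⋯ x_{α_{s-q} β_{s-q}}` times those of the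
small minor, with the same coefficients. Every other monomial of the (homogeneous) minor contains
a variable outside `D ∪ U`; those are the smallest variables, so in degrevlex such a monomial lies
below every monomial of the same degree over `D ∪ U`.
-/

open MvPolynomial Finset Equiv Equiv.Perm

section DegRevLex

variable {n : ℕ} {rank : Sym2 (Fin n) → ℕ}

lemma degRevLexLT_add_left {a b : Sym2 (Fin n) →₀ ℕ} (c : Sym2 (Fin n) →₀ ℕ)
    (h : DegRevLexLT rank a b) : DegRevLexLT rank (c + a) (c + b) := by
  have hdeg (x : Sym2 (Fin n) →₀ ℕ) : ((c + x).sum fun _ e => e) = c.degree + x.degree :=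
    map_add Finsupp.degree c x
  rcases h with h | ⟨h, v, hv, hagree⟩
  · exact Or.inl (by rw [hdeg, hdeg]; exact Nat.add_lt_add_left h _)
  · refine Or.inr ⟨by rw [hdeg, hdeg]; exact congrArg _ h, v, ?_, fun w hw => ?_⟩
    · simpa only [Finsupp.add_apply] using Nat.add_lt_add_left hv _
    · simp only [Finsupp.add_apply, hagree w hw]

lemma degRevLexLT_of_mem_support_not_mem {S : Set (Sym2 (Fin n))}
    (hS : ∀ v ∈ S, ∀ w ∉ S, rank v < rank w) {a b : Sym2 (Fin n) →₀ ℕ}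
    (hdeg : a.degree = b.degree) (hb : ↑b.support ⊆ S) {v : Sym2 (Fin n)}
    (hva : v ∈ a.support) (hv : v ∉ S) : DegRevLexLT rank a b := by
  classical
  have hvb : b v = 0 := Finsupp.notMem_support_iff.mp fun h => hv (hb h)
  have hvne : v ∈ a.neLocus b :=
    Finsupp.mem_neLocus.mpr (by rw [hvb]; exact Finsupp.mem_support_iff.mp hva)
  obtain ⟨m, hm, hmax⟩ := (a.neLocus b).exists_max_image rank ⟨v, hvne⟩
  have hmS : m ∉ S := fun hmS => (hS m hmS v hv).not_ge (hmax v hvne)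
  have hbm : b m = 0 := Finsupp.notMem_support_iff.mp fun h => hmS (hb h)
  refine Or.inr ⟨hdeg, m, ?_, fun w hw => ?_⟩
  · rw [hbm]; exact Nat.pos_of_ne_zero (hbm ▸ Finsupp.mem_neLocus.mp hm)
  · by_contra hne
    exact (hmax w (Finsupp.mem_neLocus.mpr hne)).not_gt hw

lemma IsGoodRank.rank_lt_rank (h : IsGoodRank n rank) :
    ∀ v ∈ Dset n ∪ Uset n, ∀ w ∉ Dset n ∪ Uset n, rank v < rank w := by
  obtain ⟨-, hD, hU, hU₀, hU₁, hrest⟩ := h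
  intro v hv w hw
  refine lt_of_lt_of_le ?_ (hrest w hw)
  rcases hv with ⟨i, rfl⟩ | ⟨i, j, rfl, hij | ⟨hi, hj⟩ | ⟨hi, hj⟩⟩
  · rw [hD i]; omega
  · rw [hU i j hij]; omega
  · rw [hU₀ i j hi hj]; omega
  · rw [hU₁ i j hi hj]; omega

lemma IsLeadingMonomial.add_of_coeff_add {K : Type*} [Field K]
    {f g : MvPolynomial (Sym2 (Fin n)) K} {S : Set (Sym2 (Fin n))}
    {c μ : Sym2 (Fin n) →₀ ℕ} {d : ℕ} (hμ : IsLeadingMonomial rank g μ)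
    (hS : ∀ v ∈ S, ∀ w ∉ S, rank v < rank w) (hf : f.IsHomogeneous d)
    (hcμ : ↑(c + μ).support ⊆ S)
    (hcoeff : ∀ ν, ↑(c + ν).support ⊆ S → coeff (c + ν) f = coeff ν g)
    (hsplit : ∀ ν ∈ f.support, ↑ν.support ⊆ S → ∃ ν', ν = c + ν') :
    IsLeadingMonomial rank f (c + μ) := by
  have hmem : c + μ ∈ f.support := by
    rw [mem_support_iff, hcoeff μ hcμ]
    exact mem_support_iff.mp hμ.1
  refine ⟨hmem, fun ν hν hne => ?_⟩
  by_cases hνS : ↑ν.support ⊆ S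
  · obtain ⟨ν', rfl⟩ := hsplit ν hν hνS
    have hν' : ν' ∈ g.support := by
      rw [mem_support_iff, ← hcoeff ν' hνS]
      exact mem_support_iff.mp hν
    exact degRevLexLT_add_left c (hμ.2 ν' hν' fun h => hne (h ▸ rfl))
  · obtain ⟨v, hvν, hvS⟩ := Set.not_subset.mp hνS
    have hdeg : ν.degree = (c + μ).degree :=
      (hf.degree_eq_sum_deg_support hν).symm.trans (hf.degree_eq_sum_deg_support hmem)
    exact degRevLexLT_of_mem_support_not_mem hS hdeg hcμ hvν hvS

end DegRevLex

lemma Equiv.Perm.apply_eq_self_of_le_apply {α : Type*} [LinearOrder α] [WellFoundedLT α]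
    {I : Set α} (hI : IsLowerSet I) (σ : Perm α) (h : ∀ x, σ x ∈ I → x ≤ σ x) {x : α}
    (hx : x ∈ I) : σ x = x := by
  suffices ∀ y ∈ I, σ.symm y = y by
    conv_lhs => rw [← this x hx]
    exact σ.apply_symm_apply x
  intro y
  induction y using WellFoundedLT.induction with
  | _ y ih =>
    intro hy
    have hle : σ.symm y ≤ y := by simpa using h (σ.symm y) (by simpa using hy)
    refine hle.eq_or_lt.resolve_right fun hlt => hlt.ne ?_
    exact σ.symm.injective (ih _ hlt (hI hlt.le hy))

lemma exists_extendDomain_eq {ι κ : Type*} {p : ι → Prop} [DecidablePred p] (e : κ ≃ Subtype p)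
    {σ : Perm ι} (hσ : ∀ l, ¬ p l → σ l = l) : ∃ τ : Perm κ, τ.extendDomain e = σ := by
  have hp (l : ι) : p (σ l) ↔ p l := by
    by_cases hl : p l
    · refine iff_of_true (not_not.mp fun h => h ?_) hl
      rw [σ.injective (hσ _ h)]
      exact hl
    · rw [hσ l hl]
  refine ⟨(e.permCongr).symm (σ.subtypePerm hp), Equiv.ext fun l => ?_⟩
  by_cases hl : p l
  · simp [extendDomain_apply_subtype _ _ hl]
  · rw [extendDomain_apply_not_subtype _ _ hl, hσ l hl]

section PermMonomial

variable {n : ℕ} {ι κ : Type*} [Fintype ι] [Fintype κ]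

noncomputable def permMonomial (a b : ι → Fin n) (σ : Perm ι) : Sym2 (Fin n) →₀ ℕ :=
  ∑ l, Finsupp.single s(a (σ l), b l) 1

lemma mem_support_permMonomial (a b : ι → Fin n) (σ : Perm ι) (l : ι) :
    s(a (σ l), b l) ∈ (permMonomial a b σ).support := by
  rw [permMonomial, Finsupp.mem_support_iff, Finsupp.finsetSum_apply]
  exact (Finset.sum_pos' (fun _ _ => Nat.zero_le _) ⟨l, mem_univ l, by simp⟩).ne'

lemma permMonomial_extendDomain (a b : ι → Fin n) {p : ι → Prop} [DecidablePred p]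
    (e : κ ≃ Subtype p) (τ : Perm κ) :
    permMonomial a b (τ.extendDomain e) =
      (∑ l ∈ univ.filter (fun l => ¬ p l), Finsupp.single s(a l, b l) 1) +
        permMonomial (a ∘ (↑) ∘ e) (b ∘ (↑) ∘ e) τ := by
  rw [permMonomial, ← sum_filter_not_add_sum_filter univ p]
  congr 1
  · refine sum_congr rfl fun l hl => ?_
    rw [extendDomain_apply_not_subtype _ _ (mem_filter.mp hl).2]
  · rw [sum_subtype (p := p) _ (by simp), ← e.sum_comp]
    simp [permMonomial]

end PermMonomial

section SymMinor

variable {K : Type*} [Field K] {n s q : ℕ}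

lemma coeff_symMinor (a b : Fin s → Fin n) (ν : Sym2 (Fin n) →₀ ℕ) :
    coeff ν (symMinor K a b) =
      ∑ σ : Perm (Fin s), if permMonomial a b σ = ν then ((sign σ : ℤ) : K) else 0 := by
  rw [symMinor, Matrix.det_apply', coeff_sum]
  refine sum_congr rfl fun σ _ => ?_
  rw [← map_intCast (C : K →+* MvPolynomial (Sym2 (Fin n)) K), coeff_C_mul, permMonomial]
  have : ∏ l, Matrix.of (fun k l => (X s(a k, b l) : MvPolynomial (Sym2 (Fin n)) K)) (σ l) l =
      monomial (∑ l, Finsupp.single s(a (σ l), b l) 1) 1 := (monomial_sum_one _ _).symm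
  rw [this, coeff_monomial]
  split_ifs <;> simp

lemma isHomogeneous_symMinor (a b : Fin s → Fin n) : (symMinor K a b).IsHomogeneous s := by
  rw [symMinor, Matrix.det_apply']
  refine IsHomogeneous.sum _ _ _ fun σ _ => ?_
  rw [← map_intCast (C : K →+* MvPolynomial (Sym2 (Fin n)) K)]
  have := IsHomogeneous.prod (univ : Finset (Fin s))
    (fun l => (X s(a (σ l), b l) : MvPolynomial (Sym2 (Fin n)) K)) (fun _ => 1)
    fun l _ => isHomogeneous_X K _
  simpa only [Matrix.of_apply, sum_const, card_univ, Fintype.card_fin, smul_eq_mul, mul_one]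
    using this.C_mul _

lemma exists_permMonomial_eq_of_mem_support {a b : Fin s → Fin n} {ν : Sym2 (Fin n) →₀ ℕ}
    (hν : ν ∈ (symMinor K a b).support) : ∃ σ, permMonomial a b σ = ν := by
  rw [mem_support_iff, coeff_symMinor] at hν
  obtain ⟨σ, -, hσ⟩ := exists_ne_zero_of_sum_ne_zero hν
  exact ⟨σ, (ite_ne_right_iff.mp hσ).1⟩

section Block

variable {a b : Fin s → Fin n} {p : Fin s → Prop} [DecidablePred p] {S : Set (Sym2 (Fin n))}

lemma exists_eq_add_of_mem_support_symMinor (e : Fin q ≃ Subtype p)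
    (hfix : ∀ σ : Perm (Fin s), ↑(permMonomial a b σ).support ⊆ S → ∀ l, ¬ p l → σ l = l)
    {ν : Sym2 (Fin n) →₀ ℕ}
    (hν : ν ∈ (symMinor K a b).support) (hνS : ↑ν.support ⊆ S) :
    ∃ ν', ν = (∑ l ∈ univ.filter (fun l => ¬ p l), Finsupp.single s(a l, b l) 1) + ν' := by
  obtain ⟨σ, rfl⟩ := exists_permMonomial_eq_of_mem_support hν
  obtain ⟨τ, rfl⟩ := exists_extendDomain_eq e (hfix _ hνS)
  exact ⟨_, permMonomial_extendDomain a b e τ⟩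

lemma coeff_symMinor_add (e : Fin q ≃ Subtype p)
    (hfix : ∀ σ : Perm (Fin s), ↑(permMonomial a b σ).support ⊆ S → ∀ l, ¬ p l → σ l = l)
    {ν : Sym2 (Fin n) →₀ ℕ}
    (hν : ↑((∑ l ∈ univ.filter (fun l => ¬ p l), Finsupp.single s(a l, b l) 1) + ν).support ⊆ S) :
    coeff ((∑ l ∈ univ.filter (fun l => ¬ p l), Finsupp.single s(a l, b l) 1) + ν)
      (symMinor K a b) = coeff ν (symMinor K (a ∘ (↑) ∘ e) (b ∘ (↑) ∘ e)) := by
  rw [coeff_symMinor, coeff_symMinor]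
  refine (Fintype.sum_of_injective _ (extendDomainHom_injective e) _ _ ?_ fun τ => ?_).symm
  · intro σ hσ
    refine if_neg fun h => hσ ?_
    exact exists_extendDomain_eq e (hfix σ (h ▸ hν))
  · simp only [extendDomainHom, MonoidHom.coe_mk, OneHom.coe_mk, permMonomial_extendDomain,
      sign_extendDomain, add_right_inj]

end Block

end SymMinor

lemma apply_eq_self_of_permMonomial_support_subset {n s p : ℕ} {A B : Fin s → Fin n}
    {S : Set (Sym2 (Fin n))} (hblock : ∀ i j : Fin s, (i : ℕ) < p → p ≤ (j : ℕ) → s(A i, B j) ∉ S)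
    (htri : ∀ i j : Fin s, i < j → (j : ℕ) < p → s(A i, B j) ∉ S) (σ : Perm (Fin s))
    (hσ : ↑(permMonomial A B σ).support ⊆ S) (l : Fin s) (hl : ¬ p ≤ (l : ℕ)) : σ l = l := by
  refine σ.apply_eq_self_of_le_apply (I := {l : Fin s | (l : ℕ) < p})
    (fun _ _ hyx hx => Nat.lt_of_le_of_lt hyx hx) (fun x hx => ?_) (not_le.mp hl)
  have hmem := hσ (mem_support_permMonomial A B σ x)
  have hxp : (x : ℕ) < p := not_le.mp fun hxp => hblock _ _ hx hxp hmem
  exact not_lt.mp fun hlt => htri _ _ hlt hxp hmem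

def finLastBlockEquiv {q s : ℕ} (hqs : q ≤ s) : Fin q ≃ {l : Fin s // s - q ≤ (l : ℕ)} where
  toFun k := ⟨⟨s - q + k, by omega⟩, by simp⟩
  invFun l := ⟨l - (s - q), by have := l.1.isLt; omega⟩
  left_inv k := by ext; simp
  right_inv l := by ext; have := l.2; simp only; omega

/-- Indices are 0-based: the first `s-q` positions carry `α, β`, the last `q` positions carry
`a, b`. -/
theorem stmt2 {K : Type*} [Field K] (n q s : ℕ) (hqs : q ≤ s)
    (rank : Sym2 (Fin n) → ℕ) (hrank : IsGoodRank n rank)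
    (A B : Fin s → Fin n)
    (h1 : ∀ ℓ : Fin s, (ℓ : ℕ) < s - q → s(A ℓ, B ℓ) ∈ Uset n)
    (h2 : ∀ i j : Fin s, (i : ℕ) < s - q → s - q ≤ (j : ℕ) →
      A i < B j ∧ s(A i, B j) ∉ Dset n ∪ Uset n)
    (h3 : ∀ i j : Fin s, i < j → (j : ℕ) < s - q → s(A i, B j) ∉ Dset n ∪ Uset n)
    (μ : Sym2 (Fin n) →₀ ℕ)
    (hμ : IsLeadingMonomial rank
      (symMinor K (fun k : Fin q => A ⟨s - q + (k : ℕ), by have := k.isLt; omega⟩)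
        (fun k : Fin q => B ⟨s - q + (k : ℕ), by have := k.isLt; omega⟩)) μ)
    (hμU : ↑μ.support ⊆ Uset n) :
    IsLeadingMonomial rank (symMinor K A B)
      ((∑ ℓ ∈ Finset.univ.filter (fun ℓ : Fin s => (ℓ : ℕ) < s - q),
        Finsupp.single s(A ℓ, B ℓ) 1) + μ) := by
  have hfilter : univ.filter (fun ℓ : Fin s => (ℓ : ℕ) < s - q) =
      univ.filter (fun ℓ : Fin s => ¬ s - q ≤ (ℓ : ℕ)) := by
    simp only [not_le]
  have hfix := apply_eq_self_of_permMonomial_support_subset (fun i j hi hj => (h2 i j hi hj).2) h3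
  have hcμ : ↑((∑ ℓ ∈ Finset.univ.filter (fun ℓ : Fin s => (ℓ : ℕ) < s - q),
      Finsupp.single s(A ℓ, B ℓ) 1) + μ).support ⊆ Dset n ∪ Uset n := by
    intro v hv
    rcases Finset.mem_union.mp (Finsupp.support_add hv) with hc | hμv
    · obtain ⟨ℓ, hℓ, hv⟩ := Finsupp.mem_support_finsetSum v hc
      obtain ⟨rfl, -⟩ := (Finsupp.mem_support_single _ _ _).mp hv
      exact Or.inr (h1 ℓ (mem_filter.mp hℓ).2)
    · exact Or.inr (hμU hμv)
  rw [hfilter] at hcμ ⊢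
  exact hμ.add_of_coeff_add hrank.rank_lt_rank (isHomogeneous_symMinor A B) hcμ
    (fun _ => coeff_symMinor_add (finLastBlockEquiv hqs) hfix)
    (fun ν hν hνS => exists_eq_add_of_mem_support_symMinor (finLastBlockEquiv hqs) hfix hν hνS)
end

section
/- Define index sequences (a_k) and (b_k) by a_1 = 1, b_1 = 2, and a_{2i} = 2i+1, a_{2i+1} = 2i, b_{2i} = 2i-1, b_{2i+1} = 2i+2 for i ≥ 1. Then: (1) for every integer ℓ with 1 ≤ ℓ ≤ (n-2)/2, the leading monomial of the (2ℓ+1)-minor [a_1,…,a_{2ℓ+1} | b_1,…,b_{2ℓ+1}] with respect to ≺ equals x_{12} · x_{13} · x_{24} ⋯ x_{2ℓ,2ℓ+2} = x_{12} · ∏_{k=1}^{2ℓ} x_{k,k+2}; and (2) for every integer ℓ with 1 ≤ ℓ ≤ (n-3)/2, the leading monomial of the (2ℓ)-minor [a_1,…,a_{2ℓ} | b_1,…,b_{2ℓ}] with respect to ≺ equals x_{12} · x_{13} · x_{24} ⋯ x_{2ℓ-1,2ℓ+1} = x_{12} · ∏_{k=1}^{2ℓ-1} x_{k,k+2}. 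-/
open MvPolynomial

/-!
Expanding the minor over permutations, the identity contributes the monomial
`μ = x_{12} · ∏ x_{k,k+2}`, all of whose variables lie in `D ∪ U ∖ {x_{n-1,n}}`, i.e. have rank at
most `2n - 2`. For any other permutation `σ`, some factor `x_{a_{σ(k)}, b_k}` lies outside that set:
otherwise the parity pattern of the sequences `a`, `b` forces `k ≤ σ⁻¹ k` on the odd positions and
`k ≤ σ k` on the even positions, and a permutation of a finite set that never decreases an element
is the identity. That factor is smaller in `≺` than every variable
of `μ`, so the whole term is degrevlex-smaller than `μ`; in particular `μ` survives with
coefficient `1`.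
-/

section DegRevLex

variable {n : ℕ} (rank : Sym2 (Fin n) → ℕ)

lemma not_degRevLexLT_self (μ : Sym2 (Fin n) →₀ ℕ) : ¬ DegRevLexLT rank μ μ := by
  rintro (h | ⟨-, v, hv, -⟩) <;> exact lt_irrefl _ ‹_›

lemma degRevLexLT_of_rank_lt {ν μ : Sym2 (Fin n) →₀ ℕ} (hdeg : ν.degree = μ.degree)
    {v : Sym2 (Fin n)} (hv : ν v ≠ 0) (hμ : ∀ w, μ w ≠ 0 → rank w < rank v) :
    DegRevLexLT rank ν μ := by
  have hvμ : μ v = 0 := by_contra fun h => lt_irrefl _ (hμ v h)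
  have hmem : v ∈ ν.neLocus μ := Finsupp.mem_neLocus.2 (by rwa [hvμ])
  obtain ⟨u, hu, humax⟩ := Finset.exists_max_image _ rank ⟨v, hmem⟩
  have huμ : μ u = 0 := by_contra fun h => (hμ u h).not_ge (humax v hmem)
  refine Or.inr ⟨hdeg, u, ?_, fun w hw => ?_⟩
  · have := Finsupp.mem_neLocus.1 hu
    omega
  · by_contra hne
    exact (humax w (Finsupp.mem_neLocus.2 hne)).not_gt hw

lemma isLeadingMonomial_sum_monomial {K : Type*} [Field K] {ι : Type*} [Fintype ι]
    (m : ι → Sym2 (Fin n) →₀ ℕ) (c : ι → K) (i₀ : ι) (hc : c i₀ ≠ 0)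
    (hlt : ∀ i ≠ i₀, DegRevLexLT rank (m i) (m i₀)) :
    IsLeadingMonomial rank (∑ i, monomial (m i) (c i)) (m i₀) := by
  classical
  refine ⟨?_, fun ν hν hne => ?_⟩
  · rw [mem_support_iff, coeff_sum, Finset.sum_eq_single i₀]
    · rwa [coeff_monomial, if_pos rfl]
    · intro i _ hi
      rw [coeff_monomial, if_neg]
      intro heq
      exact not_degRevLexLT_self rank _ (heq ▸ hlt i hi)
    · exact fun h => absurd (Finset.mem_univ i₀) h
  · obtain ⟨i, -, hi⟩ := Finset.mem_biUnion.1 (support_sum hν)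
    obtain rfl := Finset.mem_singleton.1 (support_monomial_subset hi)
    exact hlt i fun h => hne (h ▸ rfl)

end DegRevLex

section SymMinor

variable {K : Type*} [Field K] {n s : ℕ}

lemma symMinor_eq_sum (a b : Fin s → Fin n) :
    symMinor K a b = ∑ σ : Equiv.Perm (Fin s),
      monomial (∑ k, Finsupp.single s(a (σ k), b k) 1) ((Equiv.Perm.sign σ : ℤ) : K) := by
  rw [symMinor, Matrix.det_apply']
  refine Finset.sum_congr rfl fun σ _ => ?_
  rw [monomial_sum_index, map_intCast]
  rfl

lemma isLeadingMonomial_symMinor (rank : Sym2 (Fin n) → ℕ) (a b : Fin s → Fin n)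
    (h : ∀ σ : Equiv.Perm (Fin s), σ ≠ 1 →
      ∃ k, ∀ j, rank s(a j, b j) < rank s(a (σ k), b k)) :
    IsLeadingMonomial rank (symMinor K a b) (∑ k, Finsupp.single s(a k, b k) 1) := by
  rw [symMinor_eq_sum]
  refine isLeadingMonomial_sum_monomial rank
    (fun σ : Equiv.Perm (Fin s) => ∑ k, Finsupp.single s(a (σ k), b k) 1) _ 1 (by simp)
    fun σ hσ => ?_
  obtain ⟨k, hk⟩ := h σ hσ
  refine degRevLexLT_of_rank_lt rank (by simp [map_sum]) (v := s(a (σ k), b k)) ?_ fun w hw => ?_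
  · rw [Finsupp.finsetSum_apply]
    intro h0
    simpa using Finset.sum_eq_zero_iff.1 h0 k (Finset.mem_univ k)
  · rw [Finsupp.finsetSum_apply] at hw
    obtain ⟨j, -, hj⟩ := Finset.exists_ne_zero_of_sum_ne_zero hw
    obtain ⟨rfl, -⟩ := Finsupp.single_apply_ne_zero.1 hj
    exact hk j

end SymMinor

/-- The paper's index sequences with positions and values shifted to start at `0`:
`rowIndex m = a_{m+1} - 1` and `colIndex m = b_{m+1} - 1`. At `m = 0` the truncated subtraction
gives `rowIndex 0 = 0`. -/
def rowIndex (m : ℕ) : ℕ := m - 1 + 2 * (m % 2)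

def colIndex (m : ℕ) : ℕ := m + 1 - 2 * (m % 2)

/-- The variables of `D ∪ U` other than `x_{n-1,n}`: for a rank satisfying `IsGoodRank n`, exactly
those of rank at most `2n - 2`. -/
def IsLowPair (p q : ℕ) : Prop :=
  p = q ∨ q = p + 2 ∨ p = q + 2 ∨ p + q = 1

lemma odd_and_le_of_isLowPair {p q : ℕ} (h : IsLowPair (rowIndex p) (colIndex q))
    (hp : p % 2 = 1) : q % 2 = 1 ∧ p ≤ q := by
  unfold IsLowPair rowIndex colIndex at h
  omega

lemma le_of_isLowPair_of_even {p q : ℕ} (h : IsLowPair (rowIndex p) (colIndex q))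
    (hp : p % 2 = 0) (hq : q % 2 = 0) : q ≤ p := by
  unfold IsLowPair rowIndex colIndex at h
  omega

lemma Equiv.Perm.apply_eq_self_of_le {s : ℕ} (σ : Equiv.Perm (Fin s)) {T : Finset (Fin s)}
    (hmap : ∀ k ∈ T, σ k ∈ T) (hle : ∀ k ∈ T, k ≤ σ k) : ∀ k ∈ T, σ k = k := by
  have himage : T.image σ = T :=
    Finset.eq_of_subset_of_card_le (Finset.image_subset_iff.2 hmap)
      (Finset.card_image_of_injective _ σ.injective).ge
  have hsum : ∑ k ∈ T, k.val = ∑ k ∈ T, (σ k).val := by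
    conv_lhs => rw [← himage]
    exact Finset.sum_image fun x _ y _ hxy => σ.injective hxy
  have hle' : ∀ k ∈ T, k.val ≤ (σ k).val := fun k hk => Fin.le_iff_val_le_val.1 (hle k hk)
  exact fun k hk => Fin.ext ((Finset.sum_eq_sum_iff_of_le hle').1 hsum k hk).symm

lemma eq_one_of_forall_isLowPair {s : ℕ} (σ : Equiv.Perm (Fin s))
    (h : ∀ k, IsLowPair (rowIndex (σ k)) (colIndex k)) : σ = 1 := by
  set O := Finset.univ.filter fun k : Fin s => (k : ℕ) % 2 = 1
  have hO : ∀ k, k ∈ O ↔ (k : ℕ) % 2 = 1 := by simp [O]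
  have hodd : ∀ k ∈ O, σ⁻¹ k = k := by
    have hσ : ∀ k ∈ O, (σ⁻¹ k : ℕ) % 2 = 1 ∧ k ≤ σ⁻¹ k := fun k hk => by
      simpa using odd_and_le_of_isLowPair (p := σ (σ⁻¹ k)) (h _) (by simpa using (hO k).1 hk)
    exact σ⁻¹.apply_eq_self_of_le (fun k hk => (hO _).2 (hσ k hk).1) fun k hk => (hσ k hk).2
  have heven : ∀ k ∈ Oᶜ, σ k = k := by
    have hσ : ∀ k ∈ Oᶜ, (σ k : ℕ) % 2 = 0 := fun k hk => by
      have hk' : (k : ℕ) % 2 ≠ 1 := by simpa [hO] using hk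
      by_contra hσk
      exact hk' (odd_and_le_of_isLowPair (h k) (by omega)).1
    refine σ.apply_eq_self_of_le (fun k hk => ?_) fun k hk => ?_
    · simp [hO, hσ k hk]
    · exact le_of_isLowPair_of_even (h k) (hσ k hk) (by simpa [hO] using hk)
  refine Equiv.ext fun k => ?_
  by_cases hk : k ∈ O
  · exact (Equiv.Perm.inv_eq_iff_eq.1 (hodd k hk)).symm
  · exact heven k (Finset.mem_compl.2 hk)

section GoodRank

variable {n : ℕ} {rank : Sym2 (Fin n) → ℕ}

lemma IsGoodRank.isLowPair_of_rank_le (hrank : IsGoodRank n rank) {p q : Fin n}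
    (h : rank s(p, q) ≤ 2 * n - 2) : IsLowPair p q := by
  obtain ⟨-, -, -, -, hlast, hrest⟩ := hrank
  by_cases hmem : s(p, q) ∈ Dset n ∪ Uset n
  · rcases hmem with ⟨i, hi⟩ | ⟨i, j, hij, hcase⟩
    · rcases Sym2.eq_iff.1 hi with ⟨rfl, rfl⟩ | ⟨rfl, rfl⟩ <;> exact Or.inl rfl
    · have hnot_last : ¬ ((i : ℕ) = n - 2 ∧ (j : ℕ) = n - 1) := fun hc => by
        rw [hij, hlast i j hc.1 hc.2] at h
        omega
      unfold IsLowPair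
      rcases Sym2.eq_iff.1 hij with ⟨rfl, rfl⟩ | ⟨rfl, rfl⟩ <;> omega
  · have := hrest _ hmem
    have := p.pos
    omega

lemma IsGoodRank.rank_le_of_rowIndex (hrank : IsGoodRank n rank) {m : ℕ} (hm : m + 2 ≤ n)
    {p q : Fin n} (hp : (p : ℕ) = rowIndex m) (hq : (q : ℕ) = colIndex m) :
    rank s(p, q) ≤ 2 * n - 2 := by
  obtain ⟨-, -, hoff, h01, -, -⟩ := hrank
  unfold rowIndex at hp
  unfold colIndex at hq
  rcases Nat.eq_zero_or_pos m with rfl | hm0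
  · rw [h01 p q (by omega) (by omega)]
  · rcases Nat.mod_two_eq_zero_or_one m with heven | hodd
    · rw [hoff p q (by omega)]
      omega
    · rw [Sym2.eq_swap, hoff q p (by omega)]
      omega

lemma IsGoodRank.exists_rank_gt_of_ne_one (hrank : IsGoodRank n rank) {s : ℕ}
    {a b : Fin s → Fin n} (hab : ∀ k, (a k : ℕ) = rowIndex k ∧ (b k : ℕ) = colIndex k)
    {σ : Equiv.Perm (Fin s)} (hσ : σ ≠ 1) : ∃ k, 2 * n - 2 < rank s(a (σ k), b k) := by
  by_contra! hall
  refine hσ (eq_one_of_forall_isLowPair σ fun k => ?_)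
  rw [← (hab (σ k)).1, ← (hab k).2]
  exact hrank.isLowPair_of_rank_le (hall k)

end GoodRank

lemma sum_single_eq_of_rowIndex {n N : ℕ} (hN : N + 2 ≤ n) {a b : Fin (N + 1) → Fin n}
    (hab : ∀ k, (a k : ℕ) = rowIndex k ∧ (b k : ℕ) = colIndex k) :
    ∑ k, Finsupp.single s(a k, b k) 1 =
      Finsupp.single s((⟨0, by omega⟩ : Fin n), (⟨1, by omega⟩ : Fin n)) 1 +
        ∑ k : Fin N, Finsupp.single
          s((⟨k, by omega⟩ : Fin n), (⟨k + 2, by omega⟩ : Fin n)) 1 := by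
  rw [Fin.sum_univ_succ]
  congr 1
  · obtain ⟨ha, hb⟩ := hab 0
    simp only [Fin.val_zero, rowIndex, colIndex] at ha hb
    exact congrArg (Finsupp.single · 1) (Sym2.eq_iff.2 (Or.inl ⟨Fin.ext ha, Fin.ext hb⟩))
  · refine Finset.sum_congr rfl fun k _ => congrArg (Finsupp.single · 1) ?_
    obtain ⟨ha, hb⟩ := hab k.succ
    simp only [Fin.val_succ, rowIndex, colIndex] at ha hb
    simp only [Sym2.eq_iff, Fin.ext_iff]
    omega

lemma eq_rowIndex_of_pattern {n s ℓ : ℕ} (hs : s ≤ 2 * ℓ + 1) {a b : Fin s → Fin n}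
    (h0 : ∀ k : Fin s, (k : ℕ) = 0 → ((a k : ℕ) = 0 ∧ (b k : ℕ) = 1))
    (hodd : ∀ k : Fin s, ∀ i : ℕ, 1 ≤ i → i ≤ ℓ → (k : ℕ) = 2 * i - 1 →
      ((a k : ℕ) = 2 * i ∧ (b k : ℕ) = 2 * i - 2))
    (heven : ∀ k : Fin s, ∀ i : ℕ, 1 ≤ i → i ≤ ℓ → (k : ℕ) = 2 * i →
      ((a k : ℕ) = 2 * i - 1 ∧ (b k : ℕ) = 2 * i + 1))
    (k : Fin s) : (a k : ℕ) = rowIndex k ∧ (b k : ℕ) = colIndex k := by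
  have hk := k.isLt
  unfold rowIndex colIndex
  rcases Nat.even_or_odd' (k : ℕ) with ⟨i, hi | hi⟩
  · rcases Nat.eq_zero_or_pos i with rfl | hi0
    · have := h0 k hi
      omega
    · have := heven k i hi0 (by omega) hi
      omega
  · have := hodd k (i + 1) (by omega) (by omega) (by omega)
    omega

theorem isLeadingMonomial_symMinor_of_rowIndex {K : Type*} [Field K] {n s N : ℕ}
    (hs : s = N + 1) (hN : N + 2 ≤ n) {rank : Sym2 (Fin n) → ℕ} (hrank : IsGoodRank n rank)
    {a b : Fin s → Fin n} (hab : ∀ k, (a k : ℕ) = rowIndex k ∧ (b k : ℕ) = colIndex k) :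
    IsLeadingMonomial rank (symMinor K a b)
      (Finsupp.single s((⟨0, by omega⟩ : Fin n), (⟨1, by omega⟩ : Fin n)) 1 +
        ∑ k : Fin N, Finsupp.single
          s((⟨k, by omega⟩ : Fin n), (⟨k + 2, by omega⟩ : Fin n)) 1) := by
  subst hs
  rw [← sum_single_eq_of_rowIndex hN hab]
  refine isLeadingMonomial_symMinor rank a b fun σ hσ => ?_
  obtain ⟨k, hk⟩ := hrank.exists_rank_gt_of_ne_one hab hσ
  exact ⟨k, fun j => (hrank.rank_le_of_rowIndex (by omega) (hab j).1 (hab j).2).trans_lt hk⟩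

/-- Positions and indices are `0`-based: the paper's `a_1 = 1, b_1 = 2`,
`a_{2i} = 2i+1, b_{2i} = 2i-1` and `a_{2i+1} = 2i, b_{2i+1} = 2i+2` become the values `(0, 1)` at
position `0`, `(2i, 2i-2)` at position `2i-1` and `(2i-1, 2i+1)` at position `2i`; the bounds
`ℓ ≤ (n-2)/2` and `ℓ ≤ (n-3)/2` become `2ℓ+2 ≤ n` and `2ℓ+3 ≤ n`. -/
theorem stmt3 {K : Type*} [Field K] (n : ℕ)
    (rank : Sym2 (Fin n) → ℕ) (hrank : IsGoodRank n rank) :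
    (∀ ℓ : ℕ, ∀ hℓ1 : 1 ≤ ℓ, ∀ hℓ2 : 2 * ℓ + 2 ≤ n,
      ∀ a b : Fin (2 * ℓ + 1) → Fin n,
        (∀ k : Fin (2 * ℓ + 1), (k : ℕ) = 0 → ((a k : ℕ) = 0 ∧ (b k : ℕ) = 1)) →
        (∀ k : Fin (2 * ℓ + 1), ∀ i : ℕ, 1 ≤ i → i ≤ ℓ → (k : ℕ) = 2 * i - 1 →
          ((a k : ℕ) = 2 * i ∧ (b k : ℕ) = 2 * i - 2)) →
        (∀ k : Fin (2 * ℓ + 1), ∀ i : ℕ, 1 ≤ i → i ≤ ℓ → (k : ℕ) = 2 * i →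
          ((a k : ℕ) = 2 * i - 1 ∧ (b k : ℕ) = 2 * i + 1)) →
        IsLeadingMonomial rank (symMinor K a b)
          (Finsupp.single s((⟨0, by omega⟩ : Fin n), (⟨1, by omega⟩ : Fin n)) 1 +
            ∑ k : Fin (2 * ℓ), Finsupp.single
              s((⟨(k : ℕ), by have := k.isLt; omega⟩ : Fin n),
                (⟨(k : ℕ) + 2, by have := k.isLt; omega⟩ : Fin n)) 1))
    ∧
    (∀ ℓ : ℕ, ∀ hℓ1 : 1 ≤ ℓ, ∀ hℓ2 : 2 * ℓ + 3 ≤ n,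
      ∀ a b : Fin (2 * ℓ) → Fin n,
        (∀ k : Fin (2 * ℓ), (k : ℕ) = 0 → ((a k : ℕ) = 0 ∧ (b k : ℕ) = 1)) →
        (∀ k : Fin (2 * ℓ), ∀ i : ℕ, 1 ≤ i → i ≤ ℓ → (k : ℕ) = 2 * i - 1 →
          ((a k : ℕ) = 2 * i ∧ (b k : ℕ) = 2 * i - 2)) →
        (∀ k : Fin (2 * ℓ), ∀ i : ℕ, 1 ≤ i → i ≤ ℓ → (k : ℕ) = 2 * i →
          ((a k : ℕ) = 2 * i - 1 ∧ (b k : ℕ) = 2 * i + 1)) →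
        IsLeadingMonomial rank (symMinor K a b)
          (Finsupp.single s((⟨0, by omega⟩ : Fin n), (⟨1, by omega⟩ : Fin n)) 1 +
            ∑ k : Fin (2 * ℓ - 1), Finsupp.single
              s((⟨(k : ℕ), by have := k.isLt; omega⟩ : Fin n),
                (⟨(k : ℕ) + 2, by have := k.isLt; omega⟩ : Fin n)) 1)) := by
  refine ⟨fun ℓ _ hℓ2 a b h0 hodd heven => ?_, fun ℓ hℓ1 hℓ2 a b h0 hodd heven => ?_⟩
  · exact isLeadingMonomial_symMinor_of_rowIndex rfl hℓ2 hrank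
      (eq_rowIndex_of_pattern le_rfl h0 hodd heven)
  · exact isLeadingMonomial_symMinor_of_rowIndex (by omega) (by omega) hrank
      (eq_rowIndex_of_pattern (by omega) h0 hodd heven)
end

section
/- For an integer ℓ ≥ 1 define index sequences (ã_k)_{0 ≤ k ≤ 2ℓ} and (b̃_k)_{0 ≤ k ≤ 2ℓ} by ã_{2ℓ} = n-1, b̃_{2ℓ} = n, and ã_{2ℓ-2i} = n-(2i+1), ã_{2ℓ-(2i-1)} = n-(2i-2), b̃_{2ℓ-2i} = n-(2i-1), b̃_{2ℓ-(2i-1)} = n-2i for 1 ≤ i ≤ ℓ. Then: (1) for every integer ℓ with 1 ≤ ℓ ≤ (n-3)/2, the leading monomial of the (2ℓ+1)-minor [ã_0,…,ã_{2ℓ} | b̃_0,…,b̃_{2ℓ}] with respect to ≺ equals x_{n-1,n} · ∏_{k=n-2ℓ-1}^{n-2} x_{k,k+2}; and (2) for every integer ℓ with 1 ≤ ℓ ≤ (n-2)/2, the leading monomial of the (2ℓ)-minor [ã_1,…,ã_{2ℓ} | b̃_1,…,b̃_{2ℓ}] with respect to ≺ equals x_{n-1,n} · ∏_{k=n-2ℓ}^{n-2}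 x_{k,k+2}. -/
open MvPolynomial

namespace Stmt4Aux

def wfun (ℓ p : ℕ) : ℕ := if p % 2 = 1 then p else 10 * ℓ + 10 - p

lemma core (ℓ m n r c ar br : ℕ) (hl : 1 ≤ ℓ) (hn : n = m + 2 * ℓ + 2)
    (hr : r ≤ 2 * ℓ) (hc : c ≤ 2 * ℓ) (hmr : 1 ≤ m + r) (hmc : 1 ≤ m + c)
    (har : ar = if r = 2 * ℓ then m + 2 * ℓ else if r % 2 = 0 then m + r else m + r + 2)
    (hbr : br = if c = 2 * ℓ then m + 2 * ℓ + 1 else if c % 2 = 0 then m + c + 2 else m + c)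
    (hmem : ar = br ∨ br = ar + 2 ∨ ar = br + 2 ∨ (ar = 0 ∧ br = 1) ∨ (br = 0 ∧ ar = 1) ∨
      (ar = n - 2 ∧ br = n - 1) ∨ (br = n - 2 ∧ ar = n - 1)) :
    wfun ℓ r ≤ wfun ℓ c ∧ (wfun ℓ r = wfun ℓ c → r = c) := by
  unfold wfun
  split_ifs at har hbr ⊢ <;> omega

lemma degsum {ι α : Type*} [DecidableEq α] (t : Finset ι) (v : ι → α) :
    ((∑ i ∈ t, Finsupp.single (v i) 1).sum fun _ e => e) = t.card := by
  classical
  induction t using Finset.induction_on with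
  | empty => simp
  | @insert a s ha ih =>
    rw [Finset.sum_insert ha, Finsupp.sum_add_index' (fun _ => rfl) (fun _ _ _ => rfl),
      Finsupp.sum_single_index rfl, ih, Finset.card_insert_of_notMem ha]
    omega

lemma prodX {K : Type*} [CommSemiring K] {α ι : Type*} [DecidableEq α] (t : Finset ι)
    (v : ι → α) :
    (∏ i ∈ t, (X (v i) : MvPolynomial α K)) = monomial (∑ i ∈ t, Finsupp.single (v i) 1) 1 := by
  classical
  induction t using Finset.induction_on with
  | empty => simp
  | @insert a s ha ih =>
    have hx : (X (v a) : MvPolynomial α K) = monomial (Finsupp.single (v a) 1) 1 := by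
      rw [← X_pow_eq_monomial, pow_one]
    rw [Finset.prod_insert ha, Finset.sum_insert ha, ih, hx, monomial_mul, one_mul]

lemma mem_DU_vals {n : ℕ} {x y : Fin n} (h : s(x, y) ∈ Dset n ∪ Uset n) :
    (x : ℕ) = (y : ℕ) ∨ (y : ℕ) = (x : ℕ) + 2 ∨ (x : ℕ) = (y : ℕ) + 2 ∨
      ((x : ℕ) = 0 ∧ (y : ℕ) = 1) ∨ ((y : ℕ) = 0 ∧ (x : ℕ) = 1) ∨
      ((x : ℕ) = n - 2 ∧ (y : ℕ) = n - 1) ∨ ((y : ℕ) = n - 2 ∧ (x : ℕ) = n - 1) := by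
  rcases h with h | h
  · obtain ⟨i, hv⟩ := h
    rw [Sym2.eq_iff] at hv
    rcases hv with ⟨rfl, rfl⟩ | ⟨rfl, rfl⟩ <;> left <;> rfl
  · obtain ⟨i, j, hv, hc⟩ := h
    rw [Sym2.eq_iff] at hv
    rcases hv with ⟨rfl, rfl⟩ | ⟨rfl, rfl⟩ <;> tauto

lemma DU_rank {n : ℕ} (hn : 1 ≤ n) {rank : Sym2 (Fin n) → ℕ} (hrank : IsGoodRank n rank)
    {v : Sym2 (Fin n)} (h : v ∈ Dset n ∪ Uset n) : rank v < 2 * n := by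
  obtain ⟨-, hdiag, hsup, h01, hcorner, -⟩ := hrank
  rcases h with h | h
  · obtain ⟨i, rfl⟩ := h
    rw [hdiag]
    have := i.isLt
    omega
  · obtain ⟨i, j, rfl, hc⟩ := h
    rcases hc with hc | ⟨h0, h1⟩ | ⟨h2, h3⟩
    · rw [hsup i j hc]
      have := i.isLt
      have := j.isLt
      omega
    · rw [h01 i j h0 h1]
      omega
    · rw [hcorner i j h2 h3]
      omega

noncomputable def eMon {n sN : ℕ} (a b : Fin sN → Fin n) (σ : Equiv.Perm (Fin sN)) :
    Sym2 (Fin n) →₀ ℕ :=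
  ∑ i : Fin sN, Finsupp.single s(a (σ i), b i) 1

lemma master {K : Type*} [Field K] {n sN : ℕ}
    (rank : Sym2 (Fin n) → ℕ) (hrank : IsGoodRank n rank)
    (ℓ m : ℕ) (hl : 1 ≤ ℓ) (hn : n = m + 2 * ℓ + 2)
    (a b : Fin sN → Fin n) (pos : Fin sN → ℕ)
    (hposinj : Function.Injective pos)
    (hposle : ∀ k, pos k ≤ 2 * ℓ) (hposge : ∀ k, 1 ≤ m + pos k)
    (hA : ∀ k, (a k : ℕ) =
      if pos k = 2 * ℓ then m + 2 * ℓ else if pos k % 2 = 0 then m + pos k else m + pos k + 2)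
    (hB : ∀ k, (b k : ℕ) =
      if pos k = 2 * ℓ then m + 2 * ℓ + 1 else if pos k % 2 = 0 then m + pos k + 2 else m + pos k)
    (μ : Sym2 (Fin n) →₀ ℕ) (hμ : μ = ∑ i : Fin sN, Finsupp.single s(a i, b i) 1) :
    IsLeadingMonomial rank (symMinor K a b) μ := by
  classical
  have hvarU : ∀ k : Fin sN, s(a k, b k) ∈ Dset n ∪ Uset n := by
    intro k
    have ha := hA k
    have hb := hB k
    right
    by_cases h1 : pos k = 2 * ℓ
    · rw [if_pos h1] at ha hb
      exact ⟨a k, b k, rfl, Or.inr (Or.inr ⟨by omega, by omega⟩)⟩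
    · rw [if_neg h1] at ha hb
      by_cases h2 : pos k % 2 = 0
      · rw [if_pos h2] at ha hb
        exact ⟨a k, b k, rfl, Or.inl (by omega)⟩
      · rw [if_neg h2] at ha hb
        exact ⟨b k, a k, Sym2.eq_swap, Or.inl (by omega)⟩
  have hdet : symMinor K a b =
      ∑ σ : Equiv.Perm (Fin sN), (Equiv.Perm.sign σ : ℤ) • (monomial (eMon a b σ) (1 : K)) := by
    simp only [symMinor]
    rw [Matrix.det_apply]
    refine Finset.sum_congr rfl fun σ _ => ?_
    rw [Units.smul_def]
    congr 1
    have h := prodX (K := K) (Finset.univ : Finset (Fin sN)) (fun i => s(a (σ i), b i))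
    simpa [eMon, Matrix.of_apply] using h
  have hcoeff : ∀ ν, coeff ν (symMinor K a b) =
      ∑ σ : Equiv.Perm (Fin sN),
        (Equiv.Perm.sign σ : ℤ) • (if eMon a b σ = ν then (1 : K) else 0) := by
    intro ν
    rw [hdet, coeff_sum]
    refine Finset.sum_congr rfl fun σ _ => ?_
    rw [coeff_smul, coeff_monomial]
  have he1 : eMon a b 1 = μ := by
    rw [hμ]
    simp only [eMon, Equiv.Perm.one_apply]
  have hμsupp : ∀ w ∈ μ.support, w ∈ Dset n ∪ Uset n := by
    intro w hw
    rw [hμ] at hw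
    obtain ⟨i, -, hi⟩ := Finset.mem_biUnion.mp (Finsupp.support_finset_sum hw)
    have h2 := Finsupp.support_single_subset hi
    rw [Finset.mem_singleton] at h2
    rw [h2]
    exact hvarU i
  have hge1 : ∀ (σ : Equiv.Perm (Fin sN)) (k : Fin sN),
      1 ≤ (eMon a b σ) s(a (σ k), b k) := by
    intro σ k
    rw [eMon, Finsupp.finset_sum_apply]
    have h := Finset.single_le_sum
      (f := fun i => (Finsupp.single s(a (σ i), b i) (1 : ℕ)) s(a (σ k), b k))
      (fun i _ => Nat.zero_le _) (Finset.mem_univ k)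
    simpa using h
  have key : ∀ σ : Equiv.Perm (Fin sN),
      (∀ k, s(a (σ k), b k) ∈ Dset n ∪ Uset n) → σ = 1 := by
    intro σ hmem
    have hw : ∀ k, wfun ℓ (pos (σ k)) ≤ wfun ℓ (pos k) ∧
        (wfun ℓ (pos (σ k)) = wfun ℓ (pos k) → pos (σ k) = pos k) := fun k =>
      core ℓ m n (pos (σ k)) (pos k) _ _ hl hn (hposle _) (hposle _) (hposge _) (hposge _)
        (hA _) (hB _) (mem_DU_vals (hmem k))
    have hsum : ∑ k : Fin sN, wfun ℓ (pos (σ k)) = ∑ k : Fin sN, wfun ℓ (pos k) :=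
      Equiv.sum_comp σ fun k => wfun ℓ (pos k)
    have hall := (Finset.sum_eq_sum_iff_of_le fun k _ => (hw k).1).mp hsum
    exact Equiv.ext fun k => hposinj ((hw k).2 (hall k (Finset.mem_univ k)))
  have hmono : ∀ σ : Equiv.Perm (Fin sN), eMon a b σ = μ → σ = 1 := by
    intro σ hσ
    refine key σ fun k => ?_
    refine hμsupp _ (Finsupp.mem_support_iff.mpr ?_)
    have h := hge1 σ k
    rw [hσ] at h
    omega
  have hcμ : coeff μ (symMinor K a b) = 1 := by
    rw [hcoeff μ, Finset.sum_eq_single (1 : Equiv.Perm (Fin sN))]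
    · rw [if_pos he1]
      simp
    · intro σ _ hσ
      rw [if_neg fun h => hσ (hmono σ h), smul_zero]
    · intro h
      exact absurd (Finset.mem_univ _) h
  constructor
  · rw [MvPolynomial.mem_support_iff, hcμ]
    exact one_ne_zero
  · intro ν hν hνμ
    rw [MvPolynomial.mem_support_iff, hcoeff ν] at hν
    have hex : ∃ σ : Equiv.Perm (Fin sN), eMon a b σ = ν := by
      by_contra hno
      push_neg at hno
      exact hν (Finset.sum_eq_zero fun σ _ => by rw [if_neg (hno σ), smul_zero])
    obtain ⟨σ, hσ⟩ := hex
    have hσ1 : σ ≠ 1 := fun h => hνμ (by rw [← hσ, h, he1])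
    have hbad : ∃ k, s(a (σ k), b k) ∉ Dset n ∪ Uset n := by
      by_contra hno
      push_neg at hno
      exact hσ1 (key σ hno)
    obtain ⟨k0, hk0⟩ := hbad
    have hrk0 : 2 * n ≤ rank s(a (σ k0), b k0) := hrank.2.2.2.2.2 _ hk0
    have hν0 : 1 ≤ ν s(a (σ k0), b k0) := by
      rw [← hσ]
      exact hge1 σ k0
    have hsupprank : ∀ w : Sym2 (Fin n), 2 * n ≤ rank w → μ w = 0 := by
      intro w hwr
      by_contra h
      have h3 := DU_rank (by omega) hrank (hμsupp w (Finsupp.mem_support_iff.mpr h))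
      omega
    have hdeg : (ν.sum fun _ e => e) = (μ.sum fun _ e => e) := by
      rw [← hσ, ← he1]
      simp only [eMon]
      rw [degsum, degsum]
    right
    refine ⟨hdeg, ?_⟩
    set W := (ν.support ∪ μ.support).filter (fun w => ν w ≠ μ w) with hW
    have hW0 : s(a (σ k0), b k0) ∈ W := by
      rw [hW, Finset.mem_filter]
      have hμ0 := hsupprank _ hrk0
      exact ⟨Finset.mem_union_left _ (Finsupp.mem_support_iff.mpr (by omega)), by omega⟩
    obtain ⟨v, hvW, hvmax⟩ := Finset.exists_max_image W rank ⟨_, hW0⟩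
    have hrv : 2 * n ≤ rank v := le_trans hrk0 (hvmax _ hW0)
    have hμv : μ v = 0 := hsupprank v hrv
    have hνv : ν v ≠ μ v := (Finset.mem_filter.mp hvW).2
    refine ⟨v, by omega, fun w hw => ?_⟩
    by_contra hne
    have hwU : w ∈ ν.support ∪ μ.support := by
      rcases eq_or_ne (ν w) 0 with h0 | h0
      · exact Finset.mem_union_right _
          (Finsupp.mem_support_iff.mpr fun hh => hne (by rw [h0, hh]))
      · exact Finset.mem_union_left _ (Finsupp.mem_support_iff.mpr h0)
    have h4 := hvmax w (Finset.mem_filter.mpr ⟨hwU, hne⟩)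
    omega

end Stmt4Aux

/-- **Lemma 3.5.** (All indices and matrix entries are 0-based.  In part (1) the Lean
position `k ∈ {0,…,2ℓ}` is the paper position, and values are shifted by one, so
`ã_{2ℓ} = n-1, b̃_{2ℓ} = n` become `(n-2, n-1)`, position `2ℓ-2i` carries values
`(n-2i-2, n-2i)` and position `2ℓ-2i+1 = 2ℓ-(2i-1)` carries `(n-2i+1, n-2i-1)`.
In part (2) the Lean position `k ∈ {0,…,2ℓ-1}` is the paper position minus one.
The bounds `ℓ ≤ (n-3)/2` and `ℓ ≤ (n-2)/2` become `2ℓ+3 ≤ n` and `2ℓ+2 ≤ n`.)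
Part (1): `in_≺ [ã_0,…,ã_{2ℓ} | b̃_0,…,b̃_{2ℓ}] = x_{n-1,n}·∏_{k=n-2ℓ-1}^{n-2} x_{k,k+2}`;
Part (2): `in_≺ [ã_1,…,ã_{2ℓ} | b̃_1,…,b̃_{2ℓ}] = x_{n-1,n}·∏_{k=n-2ℓ}^{n-2} x_{k,k+2}`. -/
theorem stmt4 {K : Type*} [Field K] (n : ℕ)
    (rank : Sym2 (Fin n) → ℕ) (hrank : IsGoodRank n rank) :
    (∀ ℓ : ℕ, ∀ hℓ1 : 1 ≤ ℓ, ∀ hℓ2 : 2 * ℓ + 3 ≤ n,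
      ∀ a b : Fin (2 * ℓ + 1) → Fin n,
        (∀ k : Fin (2 * ℓ + 1), (k : ℕ) = 2 * ℓ → ((a k : ℕ) = n - 2 ∧ (b k : ℕ) = n - 1)) →
        (∀ k : Fin (2 * ℓ + 1), ∀ i : ℕ, 1 ≤ i → i ≤ ℓ → (k : ℕ) = 2 * ℓ - 2 * i →
          ((a k : ℕ) = n - 2 * i - 2 ∧ (b k : ℕ) = n - 2 * i)) →
        (∀ k : Fin (2 * ℓ + 1), ∀ i : ℕ, 1 ≤ i → i ≤ ℓ → (k : ℕ) = 2 * ℓ - 2 * i + 1 →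
          ((a k : ℕ) = n - 2 * i + 1 ∧ (b k : ℕ) = n - 2 * i - 1)) →
        IsLeadingMonomial rank (symMinor K a b)
          (Finsupp.single s((⟨n - 2, by omega⟩ : Fin n), (⟨n - 1, by omega⟩ : Fin n)) 1 +
            ∑ j : Fin (2 * ℓ), Finsupp.single
              s((⟨n - 2 * ℓ - 2 + (j : ℕ), by have := j.isLt; omega⟩ : Fin n),
                (⟨n - 2 * ℓ + (j : ℕ), by have := j.isLt; omega⟩ : Fin n)) 1))
    ∧
    (∀ ℓ : ℕ, ∀ hℓ1 : 1 ≤ ℓ, ∀ hℓ2 : 2 * ℓ + 2 ≤ n,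
      ∀ a b : Fin (2 * ℓ) → Fin n,
        (∀ k : Fin (2 * ℓ), (k : ℕ) = 2 * ℓ - 1 → ((a k : ℕ) = n - 2 ∧ (b k : ℕ) = n - 1)) →
        (∀ k : Fin (2 * ℓ), ∀ i : ℕ, 1 ≤ i → i ≤ ℓ → (k : ℕ) + 1 = 2 * ℓ - 2 * i →
          ((a k : ℕ) = n - 2 * i - 2 ∧ (b k : ℕ) = n - 2 * i)) →
        (∀ k : Fin (2 * ℓ), ∀ i : ℕ, 1 ≤ i → i ≤ ℓ → (k : ℕ) + 1 = 2 * ℓ - 2 * i + 1 →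
          ((a k : ℕ) = n - 2 * i + 1 ∧ (b k : ℕ) = n - 2 * i - 1)) →
        IsLeadingMonomial rank (symMinor K a b)
          (Finsupp.single s((⟨n - 2, by omega⟩ : Fin n), (⟨n - 1, by omega⟩ : Fin n)) 1 +
            ∑ j : Fin (2 * ℓ - 1), Finsupp.single
              s((⟨n - 2 * ℓ - 1 + (j : ℕ), by have := j.isLt; omega⟩ : Fin n),
                (⟨n - 2 * ℓ + 1 + (j : ℕ), by have := j.isLt; omega⟩ : Fin n)) 1)) := by
  constructor
  · intro ℓ hl1 hl2 a b htop heven hodd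
    set m := n - 2 * ℓ - 2 with hm
    have hA : ∀ k : Fin (2 * ℓ + 1), (a k : ℕ) =
        if (k : ℕ) = 2 * ℓ then m + 2 * ℓ
        else if (k : ℕ) % 2 = 0 then m + (k : ℕ) else m + (k : ℕ) + 2 := by
      intro k
      have hk := k.isLt
      by_cases h1 : (k : ℕ) = 2 * ℓ
      · rw [if_pos h1]
        have := (htop k h1).1
        omega
      · rw [if_neg h1]
        by_cases h2 : (k : ℕ) % 2 = 0
        · rw [if_pos h2]
          have := (heven k ((2 * ℓ - (k : ℕ)) / 2) (by omega) (by omega) (by omega)).1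
          omega
        · rw [if_neg h2]
          have := (hodd k ((2 * ℓ - (k : ℕ) + 1) / 2) (by omega) (by omega) (by omega)).1
          omega
    have hB : ∀ k : Fin (2 * ℓ + 1), (b k : ℕ) =
        if (k : ℕ) = 2 * ℓ then m + 2 * ℓ + 1
        else if (k : ℕ) % 2 = 0 then m + (k : ℕ) + 2 else m + (k : ℕ) := by
      intro k
      have hk := k.isLt
      by_cases h1 : (k : ℕ) = 2 * ℓ
      · rw [if_pos h1]
        have := (htop k h1).2
        omega
      · rw [if_neg h1]
        by_cases h2 : (k : ℕ) % 2 = 0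
        · rw [if_pos h2]
          have := (heven k ((2 * ℓ - (k : ℕ)) / 2) (by omega) (by omega) (by omega)).2
          omega
        · rw [if_neg h2]
          have := (hodd k ((2 * ℓ - (k : ℕ) + 1) / 2) (by omega) (by omega) (by omega)).2
          omega
    refine Stmt4Aux.master rank hrank ℓ m hl1 (by omega) a b (fun k => (k : ℕ))
      (fun k1 k2 h => Fin.ext h)
      (fun k => by have := k.isLt; show (k : ℕ) ≤ 2 * ℓ; omega)
      (fun k => by show 1 ≤ m + (k : ℕ); omega) hA hB _ ?_
    rw [Fin.sum_univ_castSucc, add_comm]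
    congr 1
    · refine Finset.sum_congr rfl fun j _ => ?_
      have hj := j.isLt
      have hA' := hA j.castSucc
      have hB' := hB j.castSucc
      rw [Fin.coe_castSucc] at hA' hB'
      congr 1
      split_ifs at hA' hB' <;>
        simp only [Sym2.eq_iff, Fin.ext_iff, Fin.val_mk] <;> omega
    · have hA' := hA (Fin.last (2 * ℓ))
      have hB' := hB (Fin.last (2 * ℓ))
      rw [Fin.val_last] at hA' hB'
      rw [if_pos rfl] at hA' hB'
      congr 1
      simp only [Sym2.eq_iff, Fin.ext_iff, Fin.val_mk]
      omega
  · intro ℓ hl1 hl2 a b htop heven hodd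
    set m := n - 2 * ℓ - 2 with hm
    have hA : ∀ k : Fin (2 * ℓ), (a k : ℕ) =
        if (k : ℕ) + 1 = 2 * ℓ then m + 2 * ℓ
        else if ((k : ℕ) + 1) % 2 = 0 then m + ((k : ℕ) + 1) else m + ((k : ℕ) + 1) + 2 := by
      intro k
      have hk := k.isLt
      by_cases h1 : (k : ℕ) + 1 = 2 * ℓ
      · rw [if_pos h1]
        have := (htop k (by omega)).1
        omega
      · rw [if_neg h1]
        by_cases h2 : ((k : ℕ) + 1) % 2 = 0
        · rw [if_pos h2]
          have := (heven k ((2 * ℓ - ((k : ℕ) + 1)) / 2) (by omega) (by omega) (by omega)).1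
          omega
        · rw [if_neg h2]
          have := (hodd k ((2 * ℓ - (k : ℕ)) / 2) (by omega) (by omega) (by omega)).1
          omega
    have hB : ∀ k : Fin (2 * ℓ), (b k : ℕ) =
        if (k : ℕ) + 1 = 2 * ℓ then m + 2 * ℓ + 1
        else if ((k : ℕ) + 1) % 2 = 0 then m + ((k : ℕ) + 1) + 2 else m + ((k : ℕ) + 1) := by
      intro k
      have hk := k.isLt
      by_cases h1 : (k : ℕ) + 1 = 2 * ℓ
      · rw [if_pos h1]
        have := (htop k (by omega)).2
        omega
      · rw [if_neg h1]
        by_cases h2 : ((k : ℕ) + 1) % 2 = 0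
        · rw [if_pos h2]
          have := (heven k ((2 * ℓ - ((k : ℕ) + 1)) / 2) (by omega) (by omega) (by omega)).2
          omega
        · rw [if_neg h2]
          have := (hodd k ((2 * ℓ - (k : ℕ)) / 2) (by omega) (by omega) (by omega)).2
          omega
    refine Stmt4Aux.master rank hrank ℓ m hl1 (by omega) a b (fun k => (k : ℕ) + 1)
      (fun k1 k2 h => Fin.ext (by have h' : (k1 : ℕ) + 1 = (k2 : ℕ) + 1 := h; omega))
      (fun k => by have := k.isLt; show (k : ℕ) + 1 ≤ 2 * ℓ; omega)
      (fun k => by show 1 ≤ m + ((k : ℕ) + 1); omega) hA hB _ ?_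
    have h2l : 2 * ℓ - 1 + 1 = 2 * ℓ := by omega
    rw [← Equiv.sum_comp (finCongr h2l)
      (fun i : Fin (2 * ℓ) => Finsupp.single s(a i, b i) (1 : ℕ))]
    rw [Fin.sum_univ_castSucc, add_comm]
    congr 1
    · refine Finset.sum_congr rfl fun j _ => ?_
      have hj := j.isLt
      have hA' := hA (finCongr h2l j.castSucc)
      have hB' := hB (finCongr h2l j.castSucc)
      rw [finCongr_apply_coe, Fin.coe_castSucc] at hA' hB'
      congr 1
      split_ifs at hA' hB' <;>
        simp only [Sym2.eq_iff, Fin.ext_iff, Fin.val_mk] <;> omega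
    · have hA' := hA (finCongr h2l (Fin.last (2 * ℓ - 1)))
      have hB' := hB (finCongr h2l (Fin.last (2 * ℓ - 1)))
      rw [finCongr_apply_coe, Fin.val_last] at hA' hB'
      rw [if_pos (by omega)] at hA' hB'
      congr 1
      simp only [Sym2.eq_iff, Fin.ext_iff, Fin.val_mk]
      omega
end

section
/- Let 1 ≤ s ≤ n-2 and let 1 ≤ α_1 ≤ α_2 < α_3 < ⋯ < α_s ≤ n-1 and 2 ≤ β_1 < β_2 < ⋯ < β_{s-1} ≤ β_s ≤ n be indices such that the monomial m = x_{α_1 β_1} · x_{α_2 β_2} ⋯ x_{α_s β_s} is squarefree and x_{α_t β_t} ∈ U for every t = 1,…,s. Then m is the leading monomial, with respect to ≺, of some s×s minor of X; that is, there exist sequences a_1,…,a_s and b_1,…,b_s of indices in {1,…,n}, the a's pairwise distinct and the b's pairwise distinct, with in_≺([a_1,…,a_s | b_1,…,b_s]) = m. -/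
open MvPolynomial

----------------  auxiliary combinatorics  ----------------

def incrN (n j : ℕ) : ℕ := if j + 1 = n then 0 else j + 1
def Wn (n j : ℕ) : ℕ := if j = 0 then 0 else if j ≤ n / 2 then 2 * j - 1 else 2 * (n - j)
def AdjN (n j k : ℕ) : Prop :=
  j = k ∨ j + 1 = k ∨ (j + 1 = n ∧ k = 0) ∨ k + 1 = j ∨ (k + 1 = n ∧ j = 0)
def PsiN (n d1 d2 j : ℕ) : ℕ :=
  if d1 < j ∧ j < d2 then d2 - j else (if d2 < j then j - d2 else j + n - d2)

lemma Wn_lt {n j : ℕ} (hn : 1 ≤ n) (hj : j < n) : Wn n j < n := by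
  unfold Wn; split_ifs <;> omega
lemma Wn_inj {n j k : ℕ} (hj : j < n) (hk : k < n) (h : Wn n j = Wn n k) : j = k := by
  unfold Wn at h; split_ifs at h <;> omega
lemma incrN_lt {n j : ℕ} (hn : 1 ≤ n) (hj : j < n) : incrN n j < n := by
  unfold incrN; split_ifs <;> omega
lemma Wn_adj_vals {n j k : ℕ} (hn : 3 ≤ n) (hj : j < n) (hk : k < n)
    (hadj : j + 1 = k ∨ (j + 1 = n ∧ k = 0)) :
    Wn n k = Wn n j + 2 ∨ Wn n j = Wn n k + 2 ∨ (Wn n j = 0 ∧ Wn n k = 1) ∨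
      (Wn n k = 0 ∧ Wn n j = 1) ∨ (Wn n j = n - 2 ∧ Wn n k = n - 1) ∨
      (Wn n k = n - 2 ∧ Wn n j = n - 1) := by
  unfold Wn; split_ifs <;> omega
lemma Wn_adj_rev1 {n j k : ℕ} (hn : 3 ≤ n) (hj : j < n) (hk : k < n)
    (h : Wn n k = Wn n j + 2) : AdjN n j k := by
  unfold Wn at h; unfold AdjN; split_ifs at h <;> omega
lemma Wn_adj_rev2 {n j k : ℕ} (hn : 3 ≤ n) (hj : j < n) (hk : k < n)
    (h1 : Wn n j = 0) (h2 : Wn n k = 1) : AdjN n j k := by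
  unfold Wn at h1 h2; unfold AdjN; split_ifs at h1 h2 <;> omega
lemma Wn_adj_rev3 {n j k : ℕ} (hn : 3 ≤ n) (hj : j < n) (hk : k < n)
    (h1 : Wn n j = n - 2) (h2 : Wn n k = n - 1) : AdjN n j k := by
  unfold Wn at h1 h2; unfold AdjN; split_ifs at h1 h2 <;> omega
lemma AdjN_symm {n j k : ℕ} (h : AdjN n j k) : AdjN n k j := by
  unfold AdjN at *; tauto

lemma descentN {n d1 d2 x y : ℕ} (hn : 3 ≤ n) (hd : d1 < d2) (hd2 : d2 < n)
    (hx : x < n) (hy : y < n) (hxd1 : x ≠ d1) (hxd2 : x ≠ d2)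
    (hyd1 : y ≠ d1) (hyd2 : y ≠ d2) (hxy : x ≠ y)
    (hadj : AdjN n (if d1 < x ∧ x < d2 then incrN n x else x)
      (if d1 < y ∧ y < d2 then y else incrN n y)) :
    PsiN n d1 d2 y < PsiN n d1 d2 x := by
  unfold AdjN incrN at hadj
  unfold PsiN
  split_ifs at hadj ⊢ <;> rcases hadj with h|h|h|h|h <;>
    first | omega | exact h.elim | exact h.2.elim

lemma orient_a_inj {n d1 d2 x y : ℕ} (hn : 3 ≤ n) (hd : d1 < d2) (hd2 : d2 < n)
    (hx : x < n) (hy : y < n) (hxd1 : x ≠ d1) (hxd2 : x ≠ d2)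
    (hyd1 : y ≠ d1) (hyd2 : y ≠ d2)
    (h : (if d1 < x ∧ x < d2 then incrN n x else x)
       = (if d1 < y ∧ y < d2 then incrN n y else y)) : x = y := by
  unfold incrN at h; split_ifs at h <;> omega

lemma orient_b_inj {n d1 d2 x y : ℕ} (hn : 3 ≤ n) (hd : d1 < d2) (hd2 : d2 < n)
    (hx : x < n) (hy : y < n) (hxd1 : x ≠ d1) (hxd2 : x ≠ d2)
    (hyd1 : y ≠ d1) (hyd2 : y ≠ d2)
    (h : (if d1 < x ∧ x < d2 then x else incrN n x)
       = (if d1 < y ∧ y < d2 then y else incrN n y)) : x = y := by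
  unfold incrN at h; split_ifs at h <;> omega

def WF (n : ℕ) (hn : 3 ≤ n) (j : ℕ) : Fin n := ⟨Wn n j % n, Nat.mod_lt _ (by omega)⟩

lemma WF_coe {n : ℕ} (hn : 3 ≤ n) {j : ℕ} (hj : j < n) : (WF n hn j : ℕ) = Wn n j :=
  Nat.mod_eq_of_lt (Wn_lt (by omega) hj)

lemma Uset_param {n : ℕ} (hn : 3 ≤ n) {v : Sym2 (Fin n)} (hv : v ∈ Uset n) :
    ∃ j, j < n ∧ v = s(WF n hn j, WF n hn (incrN n j)) := by
  obtain ⟨x, y, rfl, hcl⟩ := hv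
  have hx : (x : ℕ) < n := x.isLt
  have hy : (y : ℕ) < n := y.isLt
  have key : ∃ j, j < n ∧
      (((x:ℕ) = Wn n j ∧ (y:ℕ) = Wn n (incrN n j)) ∨
       ((x:ℕ) = Wn n (incrN n j) ∧ (y:ℕ) = Wn n j)) := by
    rcases hcl with h | h | h
    · rcases Nat.even_or_odd (x : ℕ) with he | ho
      · refine ⟨n - ((x:ℕ) + 2) / 2, by omega, ?_⟩
        unfold Wn incrN
        obtain ⟨c, hc⟩ := he
        split_ifs <;> first | omega | (exfalso; assumption)
      · refine ⟨((x:ℕ) + 1) / 2, by omega, ?_⟩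
        unfold Wn incrN
        obtain ⟨c, hc⟩ := ho
        split_ifs <;> first | omega | (exfalso; assumption)
    · refine ⟨0, by omega, ?_⟩
      unfold Wn incrN
      split_ifs <;> first | omega | (exfalso; assumption)
    · refine ⟨n / 2, by omega, ?_⟩
      unfold Wn incrN
      split_ifs <;> first | omega | (exfalso; assumption)
  obtain ⟨j, hjn, hj⟩ := key
  refine ⟨j, hjn, ?_⟩
  have hji : incrN n j < n := incrN_lt (by omega) hjn
  rcases hj with ⟨h1, h2⟩ | ⟨h1, h2⟩
  · have ex : x = WF n hn j := Fin.ext (by rw [WF_coe hn hjn]; exact h1)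
    have ey : y = WF n hn (incrN n j) := Fin.ext (by rw [WF_coe hn hji]; exact h2)
    rw [ex, ey]
  · have ex : x = WF n hn (incrN n j) := Fin.ext (by rw [WF_coe hn hji]; exact h1)
    have ey : y = WF n hn j := Fin.ext (by rw [WF_coe hn hjn]; exact h2)
    rw [ex, ey, Sym2.eq_swap]

lemma mem_of_edge {n : ℕ} (hn : 3 ≤ n) {j k : ℕ} (hj : j < n) (hk : k < n)
    (hadj : j + 1 = k ∨ (j + 1 = n ∧ k = 0)) :
    s(WF n hn j, WF n hn k) ∈ Dset n ∪ Uset n := by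
  right
  have := Wn_adj_vals hn hj hk hadj
  have cj := WF_coe hn hj
  have ck := WF_coe hn hk
  rcases this with h | h | ⟨h1, h2⟩ | ⟨h1, h2⟩ | ⟨h1, h2⟩ | ⟨h1, h2⟩
  · exact ⟨WF n hn j, WF n hn k, rfl, Or.inl (by omega)⟩
  · exact ⟨WF n hn k, WF n hn j, Sym2.eq_swap, Or.inl (by omega)⟩
  · exact ⟨WF n hn j, WF n hn k, rfl, Or.inr (Or.inl (by omega))⟩
  · exact ⟨WF n hn k, WF n hn j, Sym2.eq_swap, Or.inr (Or.inl (by omega))⟩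
  · exact ⟨WF n hn j, WF n hn k, rfl, Or.inr (Or.inr (by omega))⟩
  · exact ⟨WF n hn k, WF n hn j, Sym2.eq_swap, Or.inr (Or.inr (by omega))⟩

lemma mem_DU_iff {n : ℕ} (hn : 3 ≤ n) {j k : ℕ} (hj : j < n) (hk : k < n) :
    s(WF n hn j, WF n hn k) ∈ Dset n ∪ Uset n ↔ AdjN n j k := by
  have cj := WF_coe hn hj
  have ck := WF_coe hn hk
  constructor
  · rintro (⟨i, hi⟩ | ⟨x, y, heq, hcl⟩)
    · rw [Sym2.eq_iff] at hi
      have : Wn n j = Wn n k := by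
        rcases hi with ⟨h1, h2⟩ | ⟨h1, h2⟩ <;> rw [← cj, ← ck, h1, h2]
      exact Or.inl (Wn_inj hj hk this)
    · rw [Sym2.eq_iff] at heq
      rcases heq with ⟨h1, h2⟩ | ⟨h1, h2⟩
      · rcases hcl with h | ⟨ha, hb⟩ | ⟨ha, hb⟩
        · exact Wn_adj_rev1 hn hj hk (by rw [← ck, h2, h, ← h1, cj])
        · exact Wn_adj_rev2 hn hj hk (by rw [← cj, h1, ha]) (by rw [← ck, h2, hb])
        · exact Wn_adj_rev3 hn hj hk (by rw [← cj, h1, ha]) (by rw [← ck, h2, hb])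
      · apply AdjN_symm
        rcases hcl with h | ⟨ha, hb⟩ | ⟨ha, hb⟩
        · exact Wn_adj_rev1 hn hk hj (by rw [← cj, h1, h, ← h2, ck])
        · exact Wn_adj_rev2 hn hk hj (by rw [← ck, h2, ha]) (by rw [← cj, h1, hb])
        · exact Wn_adj_rev3 hn hk hj (by rw [← ck, h2, ha]) (by rw [← cj, h1, hb])
  · rintro (h | h | h | h | h)
    · subst h; exact Or.inl ⟨WF n hn j, rfl⟩
    · exact mem_of_edge hn hj hk (Or.inl h)
    · exact mem_of_edge hn hj hk (Or.inr h)
    · rw [Sym2.eq_swap]; exact mem_of_edge hn hk hj (Or.inl h)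
    · rw [Sym2.eq_swap]; exact mem_of_edge hn hk hj (Or.inr h)

----------------  polynomial helpers  ----------------

lemma prod_X_eq_monomial {ι σR R : Type*} [CommSemiring R] (F : Finset ι) (v : ι → σR) :
    (∏ k ∈ F, (X (v k) : MvPolynomial σR R)) =
      monomial (∑ k ∈ F, Finsupp.single (v k) 1) 1 := by
  classical
  induction F using Finset.cons_induction with
  | empty => simp
  | cons a F ha ih =>
      rw [Finset.prod_cons, Finset.sum_cons, ih, X, monomial_mul, one_mul]

lemma deg_sum_single {ι σR : Type*} (F : Finset ι) (v : ι → σR) :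
    ((∑ k ∈ F, Finsupp.single (v k) (1 : ℕ)).sum fun _ e => e) = F.card := by
  classical
  induction F using Finset.cons_induction with
  | empty => simp
  | cons a F ha ih =>
      rw [Finset.sum_cons, Finsupp.sum_add_index' (fun _ => rfl) (fun _ _ _ => rfl), ih,
        Finsupp.sum_single_index rfl, Finset.card_cons, add_comm]

lemma sum_single_apply {ι σR : Type*} [DecidableEq σR] (F : Finset ι) (v : ι → σR) (u : σR) :
    (∑ k ∈ F, Finsupp.single (v k) (1 : ℕ)) u = ∑ k ∈ F, if v k = u then 1 else 0 := by
  rw [Finsupp.finset_sum_apply]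
  exact Finset.sum_congr rfl fun k _ => Finsupp.single_apply

lemma sum_single_ne_zero_iff {ι σR : Type*} [DecidableEq σR] (F : Finset ι) (v : ι → σR)
    (u : σR) : (∑ k ∈ F, Finsupp.single (v k) (1 : ℕ)) u ≠ 0 ↔ ∃ k ∈ F, v k = u := by
  rw [sum_single_apply]
  constructor
  · intro h
    obtain ⟨k, hk, hne⟩ := Finset.exists_ne_zero_of_sum_ne_zero h
    refine ⟨k, hk, ?_⟩
    by_contra hc
    exact hne (if_neg hc)
  · rintro ⟨k, hk, hvk⟩ h
    rw [Finset.sum_eq_zero_iff] at h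
    have := h k hk
    rw [if_pos hvk] at this
    exact one_ne_zero this

lemma rank_lt_of_mem_U {n : ℕ} (hn : 3 ≤ n) (rank : Sym2 (Fin n) → ℕ)
    (hrank : IsGoodRank n rank) {v : Sym2 (Fin n)} (hv : v ∈ Uset n) : rank v < 2 * n := by
  obtain ⟨i, j, rfl, hcl⟩ := hv
  obtain ⟨-, -, h3, h4, h5, -⟩ := hrank
  rcases hcl with h | ⟨ha, hb⟩ | ⟨ha, hb⟩
  · rw [h3 i j h]; have := i.isLt; omega
  · rw [h4 i j ha hb]; omega
  · rw [h5 i j ha hb]; omega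

/-- **Proposition 3.6.** (All indices are 0-based: the paper conditions
`1 ≤ α_1 ≤ α_2 < α_3 < ⋯ < α_s ≤ n-1` and `2 ≤ β_1 < ⋯ < β_{s-1} ≤ β_s ≤ n`
become the hypotheses below; squarefreeness of `m = x_{α_1β_1}⋯x_{α_sβ_s}` means the
pairs `{α_t, β_t}` are pairwise distinct.)  Then `m` is the leading monomial of an
`s`-minor of the generic symmetric matrix `X`. -/
theorem stmt5 {K : Type*} [Field K] (n s : ℕ) (hs1 : 1 ≤ s) (hs2 : s ≤ n - 2)
    (rank : Sym2 (Fin n) → ℕ) (hrank : IsGoodRank n rank)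
    (α β : Fin s → Fin n)
    (hα12 : ∀ i j : Fin s, (i : ℕ) = 0 → (j : ℕ) = 1 → α i ≤ α j)
    (hαstrict : ∀ i j : Fin s, 1 ≤ (i : ℕ) → i < j → α i < α j)
    (hαlast : ∀ i : Fin s, (i : ℕ) = s - 1 → (α i : ℕ) ≤ n - 2)
    (hβ0 : ∀ i : Fin s, (i : ℕ) = 0 → 1 ≤ (β i : ℕ))
    (hβstrict : ∀ i j : Fin s, i < j → (j : ℕ) ≤ s - 2 → β i < β j)
    (hβlast : ∀ i j : Fin s, (i : ℕ) = s - 2 → (j : ℕ) = s - 1 → β i ≤ β j)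
    (hsqfree : Function.Injective fun t : Fin s => s(α t, β t))
    (hU : ∀ t : Fin s, s(α t, β t) ∈ Uset n) :
    ∃ a b : Fin s → Fin n, Function.Injective a ∧ Function.Injective b ∧
      IsLeadingMonomial rank (symMinor K a b)
        (∑ t : Fin s, Finsupp.single s(α t, β t) 1) := by
  classical
  have hn3 : 3 ≤ n := by omega
  -- edge indices of the cycle
  have hEx : ∀ t, ∃ j, j < n ∧ s(α t, β t) = s(WF n hn3 j, WF n hn3 (incrN n j)) :=
    fun t => Uset_param hn3 (hU t)
  choose E hE1 hE2 using hEx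
  have hEinj : ∀ {t u : Fin s}, E t = E u → t = u := by
    intro t u h
    apply hsqfree
    show s(α t, β t) = s(α u, β u)
    rw [hE2 t, hE2 u, h]
  -- choose two free positions d1 < d2
  have hcard : 1 < (Finset.range n \ Finset.image E Finset.univ).card := by
    have h2 : Finset.image E Finset.univ ⊆ Finset.range n := by
      intro x hx
      obtain ⟨t, -, rfl⟩ := Finset.mem_image.1 hx
      exact Finset.mem_range.2 (hE1 t)
    have h3 := Finset.card_sdiff_of_subset h2
    have h1 : (Finset.image E Finset.univ).card ≤ s := by
      have := Finset.card_image_le (s := Finset.univ) (f := E)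
      simpa using this
    rw [h3, Finset.card_range]
    omega
  obtain ⟨a1, ha1, a2, ha2, hne⟩ := Finset.one_lt_card.mp hcard
  obtain ⟨d1, hd1R, d2, hd2R, hd12⟩ :
      ∃ u ∈ Finset.range n \ Finset.image E Finset.univ,
        ∃ v ∈ Finset.range n \ Finset.image E Finset.univ, u < v := by
    rcases lt_or_gt_of_ne hne with h | h
    exacts [⟨a1, ha1, a2, ha2, h⟩, ⟨a2, ha2, a1, ha1, h⟩]
  have hd2n : d2 < n := Finset.mem_range.1 (Finset.mem_sdiff.1 hd2R).1
  have hdE1 : ∀ t, E t ≠ d1 := by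
    intro t h
    exact (Finset.mem_sdiff.1 hd1R).2 (Finset.mem_image.2 ⟨t, Finset.mem_univ t, h⟩)
  have hdE2 : ∀ t, E t ≠ d2 := by
    intro t h
    exact (Finset.mem_sdiff.1 hd2R).2 (Finset.mem_image.2 ⟨t, Finset.mem_univ t, h⟩)
  -- orientation
  set aI : Fin s → ℕ := fun t => if d1 < E t ∧ E t < d2 then incrN n (E t) else E t with haI
  set bI : Fin s → ℕ := fun t => if d1 < E t ∧ E t < d2 then E t else incrN n (E t) with hbI
  have haIlt : ∀ t, aI t < n := by
    intro t; rw [haI]; dsimp only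
    split_ifs
    · exact incrN_lt (by omega) (hE1 t)
    · exact hE1 t
  have hbIlt : ∀ t, bI t < n := by
    intro t; rw [hbI]; dsimp only
    split_ifs
    · exact hE1 t
    · exact incrN_lt (by omega) (hE1 t)
  set A : Fin s → Fin n := fun t => WF n hn3 (aI t) with hA
  set B : Fin s → Fin n := fun t => WF n hn3 (bI t) with hB
  have hpair : ∀ t, s(A t, B t) = s(α t, β t) := by
    intro t
    rw [hE2 t, hA, hB, haI, hbI]; dsimp only
    split_ifs
    · exact Sym2.eq_swap
    · rfl
  have hAinj : Function.Injective A := by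
    intro t u h
    have h' : aI t = aI u := by
      have hv : (A t : ℕ) = (A u : ℕ) := congrArg Fin.val h
      rw [hA] at hv; dsimp only at hv
      rw [WF_coe hn3 (haIlt t), WF_coe hn3 (haIlt u)] at hv
      exact Wn_inj (haIlt t) (haIlt u) hv
    apply hEinj
    exact orient_a_inj hn3 hd12 hd2n (hE1 t) (hE1 u) (hdE1 t) (hdE2 t) (hdE1 u) (hdE2 u) h'
  have hBinj : Function.Injective B := by
    intro t u h
    have h' : bI t = bI u := by
      have hv : (B t : ℕ) = (B u : ℕ) := congrArg Fin.val h
      rw [hB] at hv; dsimp only at hv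
      rw [WF_coe hn3 (hbIlt t), WF_coe hn3 (hbIlt u)] at hv
      exact Wn_inj (hbIlt t) (hbIlt u) hv
    apply hEinj
    exact orient_b_inj hn3 hd12 hd2n (hE1 t) (hE1 u) (hdE1 t) (hdE2 t) (hdE1 u) (hdE2 u) h'
  refine ⟨A, B, hAinj, hBinj, ?_⟩
  set μ : Sym2 (Fin n) →₀ ℕ := ∑ t : Fin s, Finsupp.single s(α t, β t) 1 with hμ
  -- det expansion
  set mexp : Equiv.Perm (Fin s) → (Sym2 (Fin n) →₀ ℕ) :=
    fun σ => ∑ k : Fin s, Finsupp.single s(A (σ k), B k) 1 with hmexp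
  have hdet : symMinor K A B = ∑ σ : Equiv.Perm (Fin s),
      Equiv.Perm.sign σ • (monomial (mexp σ) (1 : K)) := by
    unfold symMinor
    rw [Matrix.det_apply]
    refine Finset.sum_congr rfl fun σ _ => ?_
    rw [hmexp]; dsimp only
    rw [← prod_X_eq_monomial]
    rfl
  have hcoeff : ∀ ν, coeff ν (symMinor K A B)
      = ∑ σ : Equiv.Perm (Fin s), Equiv.Perm.sign σ • (if mexp σ = ν then (1:K) else 0) := by
    intro ν
    rw [hdet, coeff_sum]
    refine Finset.sum_congr rfl fun σ _ => ?_
    rw [coeff_smul, coeff_monomial]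
  -- the key combinatorial rigidity
  have hforce : ∀ σ : Equiv.Perm (Fin s),
      (∀ k, s(A (σ k), B k) ∈ Dset n ∪ Uset n) → σ = 1 := by
    intro σ hall
    by_contra hσ
    have hNe : (Finset.univ.filter fun t : Fin s => σ t ≠ t).Nonempty := by
      rw [Finset.filter_nonempty_iff]
      by_contra hc
      push_neg at hc
      exact hσ (Equiv.ext fun t => by
        have := hc t (Finset.mem_univ t)
        simpa using not_not.mp (by simpa using this))
    obtain ⟨t, ht, hmax⟩ :=
      Finset.exists_max_image _ (fun t => PsiN n d1 d2 (E t)) hNe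
    have htne : σ t ≠ t := (Finset.mem_filter.1 ht).2
    have hadj : AdjN n (aI (σ t)) (bI t) := by
      have h1 := hall t
      rw [hA, hB] at h1; dsimp only at h1
      exact (mem_DU_iff hn3 (haIlt (σ t)) (hbIlt t)).1 h1
    have hdrop : PsiN n d1 d2 (E t) < PsiN n d1 d2 (E (σ t)) := by
      refine descentN hn3 hd12 hd2n (hE1 (σ t)) (hE1 t) (hdE1 _) (hdE2 _) (hdE1 _) (hdE2 _)
        (fun hEeq => htne (hEinj hEeq)) ?_
      rw [haI, hbI] at hadj; dsimp only at hadj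
      exact hadj
    have hmem : σ t ∈ Finset.univ.filter fun t : Fin s => σ t ≠ t := by
      refine Finset.mem_filter.2 ⟨Finset.mem_univ _, fun h => htne (σ.injective h)⟩
    exact absurd (hmax (σ t) hmem) (by omega)
  have hμ_of_mexp : mexp 1 = μ := by
    rw [hmexp, hμ]
    exact Finset.sum_congr rfl fun k _ => by rw [Equiv.Perm.one_apply, hpair k]
  have hmexp_eq : ∀ σ : Equiv.Perm (Fin s), mexp σ = μ → σ = 1 := by
    intro σ hσ
    apply hforce
    intro k
    have h1 : μ s(A (σ k), B k) ≠ 0 := by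
      rw [← hσ, hmexp]
      rw [Ne, ← not_iff_not.2 (iff_of_eq rfl)]
      exact (sum_single_ne_zero_iff Finset.univ (fun k' => s(A (σ k'), B k')) _).2
        ⟨k, Finset.mem_univ k, rfl⟩
    have h2 : ∃ t, s(α t, β t) = s(A (σ k), B k) := by
      rw [hμ] at h1
      obtain ⟨t, -, ht⟩ := (sum_single_ne_zero_iff Finset.univ _ _).1 h1
      exact ⟨t, ht⟩
    obtain ⟨t, ht⟩ := h2
    rw [← ht]
    exact Or.inr (hU t)
  -- coefficient of μ is 1
  have hcμ : coeff μ (symMinor K A B) = 1 := by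
    rw [hcoeff]
    rw [Finset.sum_eq_single (1 : Equiv.Perm (Fin s))]
    · rw [if_pos hμ_of_mexp]
      simp
    · intro σ _ hσne
      rw [if_neg fun h => hσne (hmexp_eq σ h), smul_zero]
    · intro h
      exact absurd (Finset.mem_univ _) h
  have hμsupp : μ ∈ (symMinor K A B).support :=
    MvPolynomial.mem_support_iff.2 (by rw [hcμ]; exact one_ne_zero)
  refine ⟨hμsupp, ?_⟩
  intro ν hν hνμ
  -- find σ with mexp σ = ν
  have hνσ : ∃ σ : Equiv.Perm (Fin s), mexp σ = ν := by
    have h0 := MvPolynomial.mem_support_iff.1 hν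
    rw [hcoeff] at h0
    obtain ⟨σ, -, hσ⟩ := Finset.exists_ne_zero_of_sum_ne_zero h0
    refine ⟨σ, ?_⟩
    by_contra hc
    rw [if_neg hc, smul_zero] at hσ
    exact hσ rfl
  obtain ⟨σ, hσν⟩ := hνσ
  have hσne : σ ≠ 1 := fun h => hνμ (by rw [← hσν, h, hμ_of_mexp])
  -- a variable of ν outside D ∪ U
  have hbad : ∃ k, s(A (σ k), B k) ∉ Dset n ∪ Uset n := by
    by_contra hc
    push_neg at hc
    exact hσne (hforce σ hc)
  obtain ⟨k, hk⟩ := hbad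
  set v0 : Sym2 (Fin n) := s(A (σ k), B k) with hv0
  have hνv0 : ν v0 ≠ 0 := by
    rw [← hσν, hmexp]
    exact (sum_single_ne_zero_iff Finset.univ (fun k' => s(A (σ k'), B k')) _).2
      ⟨k, Finset.mem_univ k, rfl⟩
  have hμv : ∀ v : Sym2 (Fin n), v ∉ Uset n → μ v = 0 := by
    intro v hv
    by_contra hc
    rw [hμ] at hc
    obtain ⟨t, -, ht⟩ := (sum_single_ne_zero_iff Finset.univ _ _).1 hc
    exact hv (ht ▸ hU t)
  have hμv0 : μ v0 = 0 := hμv v0 fun h => hk (Or.inr h)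
  -- degrees agree
  have hdeg : (ν.sum fun _ e => e) = (μ.sum fun _ e => e) := by
    rw [← hσν, hmexp, hμ, deg_sum_single, deg_sum_single]
  right
  refine ⟨hdeg, ?_⟩
  -- maximal-rank difference
  set T : Finset (Sym2 (Fin n)) := Finset.univ.filter fun v => ν v ≠ μ v with hT
  have hTne : T.Nonempty := ⟨v0, Finset.mem_filter.2 ⟨Finset.mem_univ _, by rw [hμv0]; exact hνv0⟩⟩
  obtain ⟨v, hvT, hvmax⟩ := Finset.exists_max_image T rank hTne
  have hvne : ν v ≠ μ v := (Finset.mem_filter.1 hvT).2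
  have hrv : 2 * n ≤ rank v := by
    have h0 : 2 * n ≤ rank v0 := hrank.2.2.2.2.2 v0 hk
    have h1 : rank v0 ≤ rank v :=
      hvmax v0 (Finset.mem_filter.2 ⟨Finset.mem_univ _, by rw [hμv0]; exact hνv0⟩)
    omega
  have hμveq : μ v = 0 := by
    apply hμv
    intro hvU
    have := rank_lt_of_mem_U hn3 rank hrank hvU
    omega
  refine ⟨v, by omega, ?_⟩
  intro w hw
  by_contra hc
  have hwT : w ∈ T := Finset.mem_filter.2 ⟨Finset.mem_univ _, hc⟩
  exact absurd (hvmax w hwT) (by omega)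
end

section
/- Let r and m be positive integers with r < m/2, and let M ⊆ [m] be a subset with |M| = 2r. Then M is the vertex set of a matching of C_m of size r if and only if M satisfies Gale's evenness condition: for all i, j ∈ [m] \ M with i < j, the number of elements ℓ ∈ M with i < ℓ < j is even. -/
/-- Adjacency in the cycle graph `C_m` on vertex set `Fin m` (the 0-based version of
`[m] = {1,…,m}`): `i` and `j` are adjacent iff they are consecutive, or `{i,j} = {0, m-1}`. -/
def cycAdj (m : ℕ) (i j : Fin m) : Prop :=
  ((j : ℕ) = (i : ℕ) + 1 ∨ (i : ℕ) = (j : ℕ) + 1) ∨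
    (((i : ℕ) = 0 ∧ (j : ℕ) = m - 1) ∨ ((j : ℕ) = 0 ∧ (i : ℕ) = m - 1))

/-- `E` is a matching of the cycle `C_m` of size `r`: a set of `r` edges of `C_m`
that are pairwise disjoint. -/
def IsCycMatching (m r : ℕ) (E : Finset (Sym2 (Fin m))) : Prop :=
  E.card = r ∧
  (∀ e ∈ E, ∃ i j : Fin m, e = s(i, j) ∧ cycAdj m i j) ∧
  (∀ e ∈ E, ∀ f ∈ E, e ≠ f → ∀ v : Fin m, v ∈ e → v ∉ f)

lemma cycAdj_iff (m : ℕ) (i j : Fin m) :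
    cycAdj m i j ↔ ((j : ℕ) = ((i : ℕ) + 1) % m ∨ (i : ℕ) = ((j : ℕ) + 1) % m) := by
  have hi := i.isLt
  have hj := j.isLt
  have hm : 1 ≤ m := by omega
  unfold cycAdj
  constructor
  · rintro ((h | h) | (⟨h1, h2⟩ | ⟨h1, h2⟩))
    · left; rw [Nat.mod_eq_of_lt (by omega)]; exact h
    · right; rw [Nat.mod_eq_of_lt (by omega)]; exact h
    · right; have : (j : ℕ) + 1 = m := by omega
      rw [this, Nat.mod_self]; exact h1
    · left; have : (i : ℕ) + 1 = m := by omega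
      rw [this, Nat.mod_self]; exact h1
  · rintro (h | h)
    · by_cases hlt : (i : ℕ) + 1 < m
      · rw [Nat.mod_eq_of_lt hlt] at h; exact Or.inl (Or.inl h)
      · have hie : (i : ℕ) + 1 = m := by omega
        rw [hie, Nat.mod_self] at h
        exact Or.inr (Or.inr ⟨h, by omega⟩)
    · by_cases hlt : (j : ℕ) + 1 < m
      · rw [Nat.mod_eq_of_lt hlt] at h; exact Or.inl (Or.inr h)
      · have hje : (j : ℕ) + 1 = m := by omega
        rw [hje, Nat.mod_self] at h
        exact Or.inr (Or.inl ⟨h, by omega⟩)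

lemma cycAdj_add (m : ℕ) [NeZero m] (c i j : Fin m) (h : cycAdj m i j) :
    cycAdj m (i + c) (j + c) := by
  rw [cycAdj_iff] at h ⊢
  rcases h with h | h
  · left
    rw [Fin.val_add, Fin.val_add, h, Nat.mod_add_mod, Nat.mod_add_mod]
    ring_nf
  · right
    rw [Fin.val_add, Fin.val_add, h, Nat.mod_add_mod, Nat.mod_add_mod]
    ring_nf

lemma filter_lt_succ {m : ℕ} (M : Finset (Fin m)) (x : Fin m) (hx : (x : ℕ) + 1 < m)
    (hxM : x ∈ M) :
    (M.filter fun y => y < (⟨(x : ℕ) + 1, hx⟩ : Fin m)).card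
      = (M.filter fun y => y < x).card + 1 := by
  have hset : (M.filter fun y => y < (⟨(x : ℕ) + 1, hx⟩ : Fin m))
      = insert x (M.filter fun y => y < x) := by
    ext y
    simp only [Finset.mem_filter, Finset.mem_insert, Fin.lt_def]
    constructor
    · rintro ⟨hy, hlt⟩
      rcases Nat.lt_succ_iff_lt_or_eq.mp hlt with h | h
      · exact Or.inr ⟨hy, h⟩
      · exact Or.inl (Fin.ext h)
    · rintro (rfl | ⟨hy, h⟩)
      · exact ⟨hxM, Nat.lt_succ_self _⟩
      · exact ⟨hy, by omega⟩
  rw [hset, Finset.card_insert_of_notMem (by simp only [Finset.mem_filter, Fin.lt_def]; omega)]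

lemma filter_lt_succ' {m : ℕ} (M : Finset (Fin m)) (x : Fin m) (hx : (x : ℕ) + 1 < m)
    (hxM : x ∉ M) :
    (M.filter fun y => y < (⟨(x : ℕ) + 1, hx⟩ : Fin m))
      = M.filter fun y => y < x := by
  ext y
  simp only [Finset.mem_filter, Fin.lt_def]
  constructor
  · rintro ⟨hy, hlt⟩
    refine ⟨hy, ?_⟩
    rcases Nat.lt_succ_iff_lt_or_eq.mp hlt with h | h
    · exact h
    · cases Fin.ext h
      exact (hxM hy).elim
  · rintro ⟨hy, h⟩
    exact ⟨hy, by omega⟩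

lemma exists_matching (m : ℕ) (M : Finset (Fin m))
    (hlast : ∀ x ∈ M, (x : ℕ) + 1 < m)
    (hQ : ∀ j : Fin m, j ∉ M → Even ((M.filter fun y => y < j).card)) :
    ∃ E : Finset (Sym2 (Fin m)),
      2 * E.card = M.card ∧
      (∀ e ∈ E, ∃ i j : Fin m, e = s(i, j) ∧ cycAdj m i j) ∧
      (∀ e ∈ E, ∀ f ∈ E, e ≠ f → ∀ v : Fin m, v ∈ e → v ∉ f) ∧
      (∀ v : Fin m, v ∈ M ↔ ∃ e ∈ E, v ∈ e) := by
  classical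
  set b : Fin m → ℕ := fun x => (M.filter fun y => y < x).card with hbdef
  set nxt : Fin m → Fin m :=
    fun x => if h : (x : ℕ) + 1 < m then ⟨(x : ℕ) + 1, h⟩ else x with hnxtdef
  have hnxt_val : ∀ x ∈ M, (nxt x : ℕ) = (x : ℕ) + 1 := by
    intro x hx
    simp only [hnxtdef, dif_pos (hlast x hx)]
  -- key1
  have key1 : ∀ x ∈ M, Even (b x) → (nxt x ∈ M ∧ b (nxt x) = b x + 1) := by
    intro x hx hev
    have h := hlast x hx
    have hn : nxt x = (⟨(x : ℕ) + 1, h⟩ : Fin m) := by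
      simp only [hnxtdef, dif_pos h]
    rw [hn]
    by_cases hmem : (⟨(x : ℕ) + 1, h⟩ : Fin m) ∈ M
    · exact ⟨hmem, filter_lt_succ M x h hx⟩
    · exfalso
      have := hQ _ hmem
      rw [show ((M.filter fun y => y < (⟨(x : ℕ) + 1, h⟩ : Fin m)).card) = b x + 1
        from filter_lt_succ M x h hx] at this
      rw [Nat.even_add_one] at this
      exact this hev
  -- key2 : odd elements have even predecessor in M
  have key2 : ∀ x ∈ M, ¬ Even (b x) →
      ∃ y ∈ M, Even (b y) ∧ nxt y = x := by
    intro x hx hodd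
    have hx0 : (x : ℕ) ≠ 0 := by
      intro h0
      apply hodd
      have : (M.filter fun y => y < x) = ∅ := by
        ext y
        simp only [Finset.mem_filter, Fin.lt_def, h0, Finset.notMem_empty, iff_false]
        omega
      rw [hbdef]
      simp only [this, Finset.card_empty]
      exact Even.zero
    have hxlt := x.isLt
    set y : Fin m := ⟨(x : ℕ) - 1, by omega⟩ with hydef
    have hy1 : (y : ℕ) + 1 < m := by simp only [hydef]; omega
    have hyx : (⟨(y : ℕ) + 1, hy1⟩ : Fin m) = x := by
      apply Fin.ext; simp only [hydef]; omega
    have hyM : y ∈ M := by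
      by_contra hyM
      have h1 := hQ y hyM
      have h2 : b x = b y := by
        rw [hbdef]
        simp only
        rw [← hyx, filter_lt_succ' M y hy1 hyM]
      exact hodd (h2 ▸ h1)
    have hbx : b x = b y + 1 := by
      rw [hbdef]; simp only
      rw [← hyx, filter_lt_succ M y hy1 hyM]
    refine ⟨y, hyM, ?_, ?_⟩
    · rw [hbx, Nat.even_add_one] at hodd
      exact not_not.mp hodd
    · rw [hnxtdef]
      simp only [dif_pos hy1]
      exact hyx
  set A : Finset (Fin m) := M.filter (fun x => Even (b x)) with hAdef
  set B : Finset (Fin m) := M.filter (fun x => ¬ Even (b x)) with hBdef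
  have hAmem : ∀ x ∈ A, x ∈ M ∧ Even (b x) := by
    intro x hx; exact Finset.mem_filter.mp hx
  -- nxt maps A into B, injectively
  have hnxtB : ∀ x ∈ A, nxt x ∈ B := by
    intro x hx
    obtain ⟨hxM, hev⟩ := hAmem x hx
    obtain ⟨h1, h2⟩ := key1 x hxM hev
    rw [hBdef]
    refine Finset.mem_filter.mpr ⟨h1, ?_⟩
    rw [h2, Nat.even_add_one]
    exact fun h => h hev
  have key2' : ∀ x ∈ B,
      (⟨(x : ℕ) - 1, lt_of_le_of_lt (Nat.sub_le _ _) x.isLt⟩ : Fin m) ∈ A ∧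
      nxt (⟨(x : ℕ) - 1, lt_of_le_of_lt (Nat.sub_le _ _) x.isLt⟩ : Fin m) = x := by
    intro x hx
    obtain ⟨hxM, hodd⟩ := Finset.mem_filter.mp hx
    obtain ⟨y, hyM, hyev, hyx⟩ := key2 x hxM hodd
    have hyval : (y : ℕ) + 1 = (x : ℕ) := by
      have := hnxt_val y hyM
      rw [hyx] at this
      omega
    have hy : (⟨(x : ℕ) - 1, lt_of_le_of_lt (Nat.sub_le _ _) x.isLt⟩ : Fin m) = y := by
      apply Fin.ext
      simp only
      omega
    rw [hy]
    exact ⟨Finset.mem_filter.mpr ⟨hyM, hyev⟩, hyx⟩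
  have hcardAB : A.card = B.card := by
    refine Finset.card_bij' (fun x _ => nxt x)
      (fun x _ => (⟨(x : ℕ) - 1, lt_of_le_of_lt (Nat.sub_le _ _) x.isLt⟩ : Fin m))
      hnxtB (fun x hx => (key2' x hx).1) ?_ (fun x hx => (key2' x hx).2)
    intro x hx
    obtain ⟨hxM, _⟩ := hAmem x hx
    apply Fin.ext
    have := hnxt_val x hxM
    simp only
    omega
  have hABcard : M.card = 2 * A.card := by
    have hsum : A.card + B.card = M.card := by
      rw [hAdef, hBdef]
      exact Finset.card_filter_add_card_filter_not _
    omega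
  -- the matching
  refine ⟨A.image (fun x => s(x, nxt x)), ?_, ?_, ?_, ?_⟩
  · rw [Finset.card_image_of_injOn, ← hABcard]
    intro x hx y hy hxy
    obtain ⟨hxM, _⟩ := hAmem x hx
    obtain ⟨hyM, _⟩ := hAmem y hy
    rw [Sym2.eq_iff] at hxy
    rcases hxy with ⟨h, _⟩ | ⟨h1, h2⟩
    · exact h
    · exfalso
      have e1 := hnxt_val x hxM
      have e2 := hnxt_val y hyM
      have v1 : (x : ℕ) = (y : ℕ) + 1 := by rw [h1]; exact e2
      have v2 : (y : ℕ) = (x : ℕ) + 1 := by rw [← h2]; exact e1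
      omega
  · intro e he
    obtain ⟨x, hx, rfl⟩ := Finset.mem_image.mp he
    obtain ⟨hxM, _⟩ := hAmem x hx
    exact ⟨x, nxt x, rfl, Or.inl (Or.inl (hnxt_val x hxM))⟩
  · intro e he f hf hef v hve hvf
    obtain ⟨x, hx, rfl⟩ := Finset.mem_image.mp he
    obtain ⟨y, hy, rfl⟩ := Finset.mem_image.mp hf
    obtain ⟨hxM, hxev⟩ := hAmem x hx
    obtain ⟨hyM, hyev⟩ := hAmem y hy
    have e1 := hnxt_val x hxM
    have e2 := hnxt_val y hyM
    have hxy : x ≠ y := fun h => hef (by rw [h])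
    rw [Sym2.mem_iff] at hve hvf
    have hxyv : (x : ℕ) ≠ (y : ℕ) := fun h => hxy (Fin.ext h)
    rcases hve with rfl | rfl <;> rcases hvf with h | h
    · exact hxy h
    · -- x = nxt y : b x = b y + 1, both even, contradiction
      obtain ⟨_, hby⟩ := key1 y hyM hyev
      rw [← h] at hby
      rw [hby, Nat.even_add_one] at hxev
      exact hxev hyev
    · obtain ⟨_, hbx⟩ := key1 x hxM hxev
      rw [h] at hbx
      rw [hbx, Nat.even_add_one] at hyev
      exact hyev hxev
    · apply hxyv
      have : (nxt x : ℕ) = (nxt y : ℕ) := by rw [h]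
      rw [e1, e2] at this
      omega
  · intro v
    constructor
    · intro hv
      by_cases hev : Even (b v)
      · refine ⟨s(v, nxt v), Finset.mem_image_of_mem _ ?_, Sym2.mem_mk_left _ _⟩
        exact Finset.mem_filter.mpr ⟨hv, hev⟩
      · obtain ⟨y, hyM, hyev, hyx⟩ := key2 v hv hev
        refine ⟨s(y, nxt y), Finset.mem_image_of_mem _ ?_, ?_⟩
        · exact Finset.mem_filter.mpr ⟨hyM, hyev⟩
        · rw [hyx]; exact Sym2.mem_mk_right _ _
    · rintro ⟨e, he, hve⟩
      obtain ⟨x, hx, rfl⟩ := Finset.mem_image.mp he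
      obtain ⟨hxM, hxev⟩ := hAmem x hx
      rw [Sym2.mem_iff] at hve
      rcases hve with rfl | rfl
      · exact hxM
      · exact (key1 x hxM hxev).1

/-- **Lemma 4.1 (key step).** For `r < m/2` and `M ⊆ [m]` with `|M| = 2r`:  `M` is the
vertex set of a matching of `C_m` of size `r` iff `M` satisfies Gale's evenness condition:
for all `i < j` not in `M`, the number of elements of `M` strictly between them is even. -/
theorem stmt7 (m r : ℕ) (hr : 1 ≤ r) (hrm : 2 * r < m)
    (M : Finset (Fin m)) (hM : M.card = 2 * r) :
    (∃ E : Finset (Sym2 (Fin m)), IsCycMatching m r E ∧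
        ∀ v : Fin m, v ∈ M ↔ ∃ e ∈ E, v ∈ e) ↔
      (∀ i j : Fin m, i ∉ M → j ∉ M → i < j →
        Even ((M.filter fun ℓ => i < ℓ ∧ ℓ < j).card)) := by
  classical
  have hm3 : 3 ≤ m := by omega
  constructor
  · -- forward: matching implies evenness
    rintro ⟨E, ⟨hcard, hedges, hdisj⟩, hcover⟩ i j hi hj hij
    have hMsub : ∀ e ∈ E, ∀ v : Fin m, v ∈ e → v ∈ M :=
      fun e he v hv => (hcover v).2 ⟨e, he, hv⟩
    have key : M.filter (fun ℓ => i < ℓ ∧ ℓ < j)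
        = E.biUnion (fun e =>
            (M.filter (fun ℓ => i < ℓ ∧ ℓ < j)).filter (· ∈ e)) := by
      ext x
      simp only [Finset.mem_biUnion, Finset.mem_filter]
      constructor
      · rintro ⟨hxM, hPx⟩
        obtain ⟨e, he, hxe⟩ := (hcover x).1 hxM
        exact ⟨e, he, ⟨hxM, hPx⟩, hxe⟩
      · rintro ⟨e, _, ⟨h1, h2⟩, _⟩
        exact ⟨h1, h2⟩
    have hdisj2 : ∀ e ∈ E, ∀ f ∈ E, e ≠ f →
        Disjoint ((M.filter (fun ℓ => i < ℓ ∧ ℓ < j)).filter (· ∈ e))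
          ((M.filter (fun ℓ => i < ℓ ∧ ℓ < j)).filter (· ∈ f)) := by
      intro e he f hf hef
      rw [Finset.disjoint_left]
      intro x hxe hxf
      exact hdisj e he f hf hef x (Finset.mem_filter.mp hxe).2 (Finset.mem_filter.mp hxf).2
    rw [key, Finset.card_biUnion hdisj2]
    refine Finset.sum_induction _ Even (fun _ _ => Even.add) Even.zero ?_
    intro e he
    obtain ⟨a, b, rfl, hadj⟩ := hedges e he
    have haM : a ∈ M := hMsub _ he a (Sym2.mem_mk_left _ _)
    have hbM : b ∈ M := hMsub _ he b (Sym2.mem_mk_right _ _)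
    set S := (M.filter (fun ℓ => i < ℓ ∧ ℓ < j)).filter (· ∈ s(a, b)) with hSdef
    have hsub : ∀ x ∈ S, x = a ∨ x = b := by
      intro x hx
      exact Sym2.mem_iff.mp (Finset.mem_filter.mp hx).2
    have hia : (i : ℕ) ≠ (a : ℕ) := fun h => hi ((Fin.ext h : i = a) ▸ haM)
    have hib : (i : ℕ) ≠ (b : ℕ) := fun h => hi ((Fin.ext h : i = b) ▸ hbM)
    have hja : (j : ℕ) ≠ (a : ℕ) := fun h => hj ((Fin.ext h : j = a) ▸ haM)
    have hjb : (j : ℕ) ≠ (b : ℕ) := fun h => hj ((Fin.ext h : j = b) ▸ hbM)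
    have hjlt := j.isLt
    have hPab : ((i < a ∧ a < j) ↔ (i < b ∧ b < j)) := by
      simp only [Fin.lt_def]
      rcases hadj with (h | h) | (⟨h1, h2⟩ | ⟨h1, h2⟩) <;> omega
    have hiff : a ∈ S ↔ b ∈ S := by
      rw [hSdef]
      simp only [Finset.mem_filter, Sym2.mem_iff]
      constructor
      · rintro ⟨⟨_, hP⟩, _⟩
        refine ⟨⟨hbM, hPab.mp hP⟩, ?_⟩
        simp
      · rintro ⟨⟨_, hP⟩, _⟩
        refine ⟨⟨haM, hPab.mpr hP⟩, ?_⟩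
        simp
    have hab : a ≠ b := by
      intro h
      apply hia
      have : (a : ℕ) = (b : ℕ) := by rw [h]
      rcases hadj with (h' | h') | (⟨h1, h2⟩ | ⟨h1, h2⟩) <;> omega
    by_cases ha : a ∈ S
    · have hb : b ∈ S := hiff.mp ha
      have hS2 : S = {a, b} := by
        apply Finset.Subset.antisymm
        · intro x hx
          rcases hsub x hx with rfl | rfl <;> simp
        · intro x hx
          rcases Finset.mem_insert.mp hx with rfl | hx'
          · exact ha
          · rcases Finset.mem_singleton.mp hx' with rfl
            exact hb
      rw [hS2, Finset.card_pair hab]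
      exact even_two
    · have hb : b ∉ S := fun h => ha (hiff.mpr h)
      have hS0 : S = ∅ := by
        apply Finset.eq_empty_of_forall_notMem
        intro x hx
        rcases hsub x hx with rfl | rfl
        · exact ha hx
        · exact hb hx
      rw [hS0, Finset.card_empty]
      exact Even.zero
  · -- backward: evenness implies matching
    intro heven
    haveI : NeZero m := ⟨by omega⟩
    -- find d not in M
    have hdex : ∃ d : Fin m, d ∉ M := by
      by_contra h
      push_neg at h
      have : M = Finset.univ := Finset.eq_univ_iff_forall.mpr h
      rw [this, Finset.card_univ, Fintype.card_fin] at hM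
      omega
    obtain ⟨d, hd⟩ := hdex
    have hdlt := d.isLt
    set c : Fin m := ⟨m - 1 - (d : ℕ), by omega⟩ with hcdef
    have hval : ∀ x : Fin m, ((x + c : Fin m) : ℕ)
        = if (x : ℕ) ≤ (d : ℕ) then (x : ℕ) + (m - 1 - (d : ℕ))
          else (x : ℕ) - (d : ℕ) - 1 := by
      intro x
      have hxlt := x.isLt
      rw [Fin.val_add, hcdef]
      simp only
      split
      · rw [Nat.mod_eq_of_lt (by omega)]
      · have h1 : (x : ℕ) + (m - 1 - (d : ℕ)) = ((x : ℕ) - (d : ℕ) - 1) + m := by omega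
        rw [h1, Nat.add_mod_right, Nat.mod_eq_of_lt (by omega)]
    have hinj : Function.Injective (fun x : Fin m => x + c) := add_left_injective c
    set M' : Finset (Fin m) := M.image (fun x => x + c) with hM'def
    have hmemM' : ∀ v : Fin m, v ∈ M ↔ v + c ∈ M' := by
      intro v
      constructor
      · intro hv
        exact Finset.mem_image_of_mem _ hv
      · intro hv
        obtain ⟨x, hx, hxv⟩ := Finset.mem_image.mp hv
        have : x = v := hinj hxv
        exact this ▸ hx
    have hne : ∀ x : Fin m, x ∈ M → (x : ℕ) ≠ (d : ℕ) :=
      fun x hx h => hd ((Fin.ext h : x = d) ▸ hx)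
    have hlast' : ∀ x ∈ M', (x : ℕ) + 1 < m := by
      intro y hy
      obtain ⟨x, hx, rfl⟩ := Finset.mem_image.mp hy
      have hxlt := x.isLt
      have hxd := hne x hx
      rw [hval x]
      split <;> omega
    have hcardM' : M'.card = 2 * r := by
      rw [hM'def, Finset.card_image_of_injective _ hinj, hM]
    -- the Q condition for M'
    have hQ : ∀ j : Fin m, j ∉ M' → Even ((M'.filter fun y => y < j).card) := by
      intro j hj
      set j' : Fin m := j - c with hj'def
      have hj'c : j' + c = j := sub_add_cancel j c
      have hj'M : j' ∉ M := fun h => hj (hj'c ▸ (hmemM' j').mp h)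
      have hj'lt := j'.isLt
      have hfilter : (M'.filter fun y => y < j)
          = (M.filter fun x => x + c < j).image (fun x => x + c) := by
        rw [hM'def, Finset.filter_image]
      rw [hfilter, Finset.card_image_of_injective _ hinj, ← hj'c]
      have hd'ne := hne
      rcases lt_trichotomy ((d : ℕ)) ((j' : ℕ)) with hcase | hcase | hcase
      · -- d < j'
        have hfeq : (M.filter fun x => x + c < j' + c)
            = M.filter (fun ℓ => d < ℓ ∧ ℓ < j') := by
          apply Finset.filter_congr
          intro x hx
          have hxd := hne x hx
          have hxj : (x : ℕ) ≠ (j' : ℕ) := fun h => hj'M ((Fin.ext h : x = j') ▸ hx)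
          have hxlt := x.isLt
          simp only [Fin.lt_def, hval x, hval j']
          constructor
          · intro h
            split at h <;> split at h <;> omega
          · intro h
            split <;> split <;> omega
        rw [hfeq]
        exact heven d j' hd hj'M (Fin.lt_def.mpr hcase)
      · -- d = j'
        have hfeq : (M.filter fun x => x + c < j' + c) = M := by
          apply Finset.filter_true_of_mem
          intro x hx
          have hxd := hne x hx
          have hxlt := x.isLt
          simp only [Fin.lt_def, hval x, hval j']
          split <;> split <;> omega
        rw [hfeq, hM]
        exact even_two_mul r
      · -- j' < d
        have hfneg : (M.filter fun x => ¬ (x + c < j' + c))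
            = M.filter (fun ℓ => j' < ℓ ∧ ℓ < d) := by
          apply Finset.filter_congr
          intro x hx
          have hxd := hne x hx
          have hxj : (x : ℕ) ≠ (j' : ℕ) := fun h => hj'M ((Fin.ext h : x = j') ▸ hx)
          have hxlt := x.isLt
          simp only [Fin.lt_def, not_lt, Fin.le_def, hval x, hval j']
          constructor
          · intro h
            split at h <;> split at h <;> omega
          · intro h
            split <;> split <;> omega
        have hsplit := Finset.card_filter_add_card_filter_not
          (s := M) (p := fun x => x + c < j' + c)
        rw [hfneg, hM] at hsplit
        have hinner := heven j' d hj'M hd (Fin.lt_def.mpr hcase)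
        have hle : (M.filter (fun ℓ => j' < ℓ ∧ ℓ < d)).card ≤ 2 * r := by
          rw [← hM]; exact Finset.card_filter_le _ _
        have h2r : Even (2 * r) := even_two_mul r
        have : (M.filter fun x => x + c < j' + c).card
            = 2 * r - (M.filter (fun ℓ => j' < ℓ ∧ ℓ < d)).card := by omega
        rw [this]
        rw [Nat.even_sub hle]
        constructor <;> intro <;> assumption
    obtain ⟨E', hE'card, hE'edges, hE'disj, hE'cover⟩ := exists_matching m M' hlast' hQ
    -- pull back
    set g : Fin m → Fin m := fun x => x - c with hgdef
    have hginj : Function.Injective g := fun x y h => by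
      simpa using sub_left_injective (G := Fin m) h
    have hmem2 : ∀ (v : Fin m) (e : Sym2 (Fin m)), v ∈ Sym2.map g e ↔ v + c ∈ e := by
      intro v e
      rw [Sym2.mem_map]
      constructor
      · rintro ⟨a, ha, rfl⟩
        rw [hgdef]
        simpa [sub_add_cancel] using ha
      · intro h
        exact ⟨v + c, h, by rw [hgdef]; simp [add_sub_cancel_right]⟩
    refine ⟨E'.image (Sym2.map g), ⟨?_, ?_, ?_⟩, ?_⟩
    · rw [Finset.card_image_of_injective _ (Sym2.map.injective hginj)]
      omega
    · intro e he
      obtain ⟨e', he', rfl⟩ := Finset.mem_image.mp he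
      obtain ⟨i, j, rfl, hadj⟩ := hE'edges e' he'
      refine ⟨g i, g j, by rw [Sym2.map_pair_eq], ?_⟩
      have := cycAdj_add m (-c) i j hadj
      simpa [hgdef, sub_eq_add_neg] using this
    · intro e he f hf hef v hve hvf
      obtain ⟨e', he', rfl⟩ := Finset.mem_image.mp he
      obtain ⟨f', hf', rfl⟩ := Finset.mem_image.mp hf
      have hef' : e' ≠ f' := fun h => hef (by rw [h])
      exact hE'disj e' he' f' hf' hef' (v + c) ((hmem2 v e').mp hve) ((hmem2 v f').mp hvf)
    · intro v
      rw [hmemM' v, hE'cover (v + c)]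
      constructor
      · rintro ⟨e', he', hv⟩
        exact ⟨Sym2.map g e', Finset.mem_image_of_mem _ he', (hmem2 v e').mpr hv⟩
      · rintro ⟨e, he, hv⟩
        obtain ⟨e', he', rfl⟩ := Finset.mem_image.mp he
        exact ⟨e', he', (hmem2 v e').mp hv⟩
end

section
/- Let r and m be positive integers with r < m/2, and let N ⊆ [m] be a subset with |N| = r+1 containing no edge of C_m (i.e., no two elements of N are adjacent in C_m). Then: (a) N is not covered by any matching of C_m of size r; and (b) for every v ∈ N, the set N \ {v} is covered by some matching of C_m of size r. In other words, N is a minimal nonface of the complex 𝓜_{m,r}. -/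
lemma cycAdj_symm {m : ℕ} {i j : Fin m} (h : cycAdj m i j) : cycAdj m j i := by
  unfold cycAdj at *; tauto

lemma val_add_one {m : ℕ} [NeZero m] (hm : 2 ≤ m) (w : Fin m) :
    ((w + 1 : Fin m) : ℕ) = (w.val + 1) % m := by
  rw [Fin.add_def, Fin.val_one']
  rw [Nat.mod_eq_of_lt (by omega : 1 < m)]

lemma succ_adj {m : ℕ} [NeZero m] (hm : 2 ≤ m) (w : Fin m) : cycAdj m w (w + 1) := by
  have h := val_add_one hm w
  have hw := w.isLt
  unfold cycAdj
  rcases Nat.lt_or_ge (w.val + 1) m with h1 | h1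
  · rw [Nat.mod_eq_of_lt h1] at h
    exact Or.inl (Or.inl h)
  · have hwm : w.val = m - 1 := by omega
    have hz : (w.val + 1) % m = 0 := by
      have : w.val + 1 = m := by omega
      simp [this]
    rw [hz] at h
    exact Or.inr (Or.inr ⟨h, hwm⟩)

lemma add_one_inj {m : ℕ} [NeZero m] {w w' : Fin m} (h : w + 1 = w' + 1) : w = w' :=
  add_right_cancel h

/-- **Lemma 4.2 (first half).** For `1 ≤ r < m/2`, every `(r+1)`-element subset `N` of
`[m]` containing no edge of `C_m` is a minimal nonface of `𝓜_{m,r}`: (a) `N` is not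
covered by any matching of `C_m` of size `r`, and (b) for each `v ∈ N` the set
`N \ {v}` is covered by some matching of `C_m` of size `r`. -/
theorem stmt10 (m r : ℕ) (hr : 1 ≤ r) (hrm : 2 * r < m)
    (N : Finset (Fin m)) (hcard : N.card = r + 1)
    (hnoedge : ∀ i ∈ N, ∀ j ∈ N, ¬ cycAdj m i j) :
    (¬ ∃ E : Finset (Sym2 (Fin m)), IsCycMatching m r E ∧
        ∀ v ∈ N, ∃ e ∈ E, v ∈ e) ∧
    (∀ v ∈ N, ∃ E : Finset (Sym2 (Fin m)), IsCycMatching m r E ∧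
        ∀ w ∈ N.erase v, ∃ e ∈ E, w ∈ e) := by
  have hm : 2 ≤ m := by omega
  haveI : NeZero m := ⟨by omega⟩
  constructor
  · rintro ⟨E, ⟨hcardE, hedges, hdisj⟩, hcov⟩
    classical
    set f : Fin m → Sym2 (Fin m) := fun v =>
      if h : ∃ e ∈ E, v ∈ e then h.choose else s(v, v) with hf
    have hmem : ∀ v ∈ N, f v ∈ E ∧ v ∈ f v := by
      intro v hv
      have h : ∃ e ∈ E, v ∈ e := hcov v hv
      simp only [hf, dif_pos h]
      exact h.choose_spec
    have hlt : E.card < N.card := by omega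
    obtain ⟨x, hx, y, hy, hxy, hfeq⟩ :=
      Finset.exists_ne_map_eq_of_card_lt_of_maps_to hlt (fun v hv => (hmem v hv).1)
    have hxe := (hmem x hx).2
    have hye := (hmem y hy).2
    rw [hfeq] at hxe
    obtain ⟨i, j, he, hij⟩ := hedges (f y) (hmem y hy).1
    rw [he, Sym2.mem_iff] at hxe hye
    rcases hxe with rfl | rfl <;> rcases hye with rfl | rfl
    · exact hxy rfl
    · exact hnoedge x hx y hy hij
    · exact hnoedge y hy x hx hij
    · exact hxy rfl
  · intro v hv
    classical
    refine ⟨(N.erase v).image (fun w => s(w, w + 1)), ⟨?_, ?_, ?_⟩, ?_⟩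
    · have hinj : Set.InjOn (fun w : Fin m => s(w, w + 1)) (N.erase v) := by
        intro w hw w' hw' heq
        rw [Sym2.eq_iff] at heq
        rcases heq with ⟨h1, _⟩ | ⟨h1, h2⟩
        · exact h1
        · exact absurd (by rw [h1]; exact succ_adj hm w' : cycAdj m w' w)
            (hnoedge w' (N.mem_of_mem_erase hw') w (N.mem_of_mem_erase hw))
      rw [Finset.card_image_of_injOn hinj, Finset.card_erase_of_mem hv, hcard]
      omega
    · intro e he
      simp only [Finset.mem_image] at he
      obtain ⟨w, _, rfl⟩ := he
      exact ⟨w, w + 1, rfl, succ_adj hm w⟩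
    · intro e he f hf hef x hxe hxf
      simp only [Finset.mem_image] at he hf
      obtain ⟨w, hw, rfl⟩ := he
      obtain ⟨w', hw', rfl⟩ := hf
      rw [Sym2.mem_iff] at hxe hxf
      rcases hxe with h1 | h1 <;> rcases hxf with h2 | h2
      · exact hef (by rw [h1.symm.trans h2])
      · have he : w = w' + 1 := h1.symm.trans h2
        exact hnoedge w' (N.mem_of_mem_erase hw') w (N.mem_of_mem_erase hw)
          (by rw [he]; exact succ_adj hm w')
      · have he : w' = w + 1 := h2.symm.trans h1
        exact hnoedge w (N.mem_of_mem_erase hw) w' (N.mem_of_mem_erase hw')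
          (by rw [he]; exact succ_adj hm w)
      · exact hef (by rw [add_one_inj (h1.symm.trans h2)])
    · intro w hw
      exact ⟨s(w, w + 1), Finset.mem_image_of_mem _ hw, Sym2.mem_mk_left w _⟩
end
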